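/- arXiv:math/0608105 — 7 statements merged into one kernel-verified Lean document; each statement's English description precedes it below -/
import Mathlib

section
/- Let (uₙ) be a sequence in a Hilbert space with ‖uₙ‖ ≤ 1 for all n. For h ∈ ℕ set γ_h = limsup_{N→∞} |(1/N) ∑_{n=0}^{N-1} ⟨u_{n+h}, uₙ⟩|. Then limsup_{N→∞} ‖(1/N) ∑_{n=0}^{N-1} uₙ‖² ≤ limsup_{H→∞} (1/H) ∑_{h=0}^{H-1} γ_h. -/
/-!
Replacing each `uₙ` by the window average `H⁻¹ ∑_{h<H} u_{n+h}` changes the Cesàro mean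
`N⁻¹ ∑_{n<N} uₙ` by `O(H/N)`. By Cauchy–Schwarz, the squared norm of the averaged sum is at
most `N⁻¹ H⁻² ∑_{n<N} ‖∑_{h<H} u_{n+h}‖²`, which expands into correlations
`∑_n ⟨u_{n+h}, u_{n+h'}⟩`; up to `O(H)` boundary terms these equal `∑_n ⟨u_{n+|h-h'|}, uₙ⟩`.
Letting `N → ∞` bounds the left-hand side by `H⁻² ∑_{h,h'<H} γ_{|h-h'|}` for every `H`.
Each row `∑_{h'<H} γ_{|h-h'|}` is at most `S (h+1) + S (H-h)` with `S k = ∑_{d<k} γ_d`, and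
`S k ≤ (L + ε) k + C` whenever `L` is the limsup of `S k / k`, so this bound is eventually
below `L + 2ε`.
-/

open Filter Finset
open scoped InnerProductSpace

lemma norm_sum_range_add_sub_sum_range_le {F : Type*} [SeminormedAddCommGroup F] {a : ℕ → F}
    (ha : ∀ k, ‖a k‖ ≤ 1) (m N : ℕ) :
    ‖∑ n ∈ range N, a (n + m) - ∑ n ∈ range N, a n‖ ≤ 2 * m := by
  induction m with
  | zero => simp
  | succ m ih =>
    have htelescope : ∑ n ∈ range N, a (n + (m + 1)) - ∑ n ∈ range N, a n =
        (∑ n ∈ range N, a (n + m) - ∑ n ∈ range N, a n) + (a (N + m) - a m) := by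
      have := sum_range_sub (fun i => a (i + m)) N
      simp only [zero_add] at this
      rw [← this, sum_sub_distrib]
      simp only [Nat.add_right_comm _ 1 m, add_assoc]
      abel
    rw [htelescope]
    calc _ ≤ ‖∑ n ∈ range N, a (n + m) - ∑ n ∈ range N, a n‖ + (‖a (N + m)‖ + ‖a m‖) :=
          (norm_add_le _ _).trans (add_le_add le_rfl (norm_sub_le _ _))
      _ ≤ 2 * m + (1 + 1) := by gcongr <;> apply ha
      _ = 2 * ↑(m + 1) := by push_cast; ring

section Correlation

variable {E : Type*} [NormedAddCommGroup E] [InnerProductSpace ℂ E] {u : ℕ → E}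

lemma norm_inner_le_one (hu : ∀ n, ‖u n‖ ≤ 1) (m n : ℕ) : ‖⟪u m, u n⟫_ℂ‖ ≤ 1 :=
  (norm_inner_le_norm _ _).trans (mul_le_one₀ (hu m) (norm_nonneg _) (hu n))

lemma norm_sum_inner_add_le_of_le (hu : ∀ n, ‖u n‖ ≤ 1) {h h' : ℕ} (hle : h' ≤ h) (N : ℕ) :
    ‖∑ n ∈ range N, ⟪u (n + h), u (n + h')⟫_ℂ‖ ≤
      ‖∑ n ∈ range N, ⟪u (n + (h - h')), u n⟫_ℂ‖ + 2 * h' := by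
  have hshift : ∀ n, ⟪u (n + h), u (n + h')⟫_ℂ = ⟪u (n + h' + (h - h')), u (n + h')⟫_ℂ :=
    fun n => by rw [add_assoc, Nat.add_sub_cancel' hle]
  simp only [hshift]
  exact (norm_le_norm_add_norm_sub' _ _).trans (add_le_add le_rfl
    (norm_sum_range_add_sub_sum_range_le (a := fun k => ⟪u (k + (h - h')), u k⟫_ℂ)
      (fun k => norm_inner_le_one hu _ _) h' N))

lemma norm_sum_inner_add_le (hu : ∀ n, ‖u n‖ ≤ 1) (h h' N : ℕ) :
    ‖∑ n ∈ range N, ⟪u (n + h), u (n + h')⟫_ℂ‖ ≤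
      ‖∑ n ∈ range N, ⟪u (n + Nat.dist h h'), u n⟫_ℂ‖ + 2 * ↑(min h h') := by
  rcases le_total h' h with hle | hle
  · rw [Nat.dist_eq_sub_of_le_right hle, min_eq_right hle]
    exact norm_sum_inner_add_le_of_le hu hle N
  · have hsymm : ‖∑ n ∈ range N, ⟪u (n + h), u (n + h')⟫_ℂ‖ =
        ‖∑ n ∈ range N, ⟪u (n + h'), u (n + h)⟫_ℂ‖ := by
      rw [← Complex.norm_conj, map_sum]
      simp only [inner_conj_symm]
    rw [hsymm, Nat.dist_eq_sub_of_le hle, min_eq_left hle]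
    exact norm_sum_inner_add_le_of_le hu hle N

lemma sum_norm_sum_range_add_sq_le (H N : ℕ) :
    ∑ n ∈ range N, ‖∑ h ∈ range H, u (n + h)‖ ^ 2 ≤
      ∑ h ∈ range H, ∑ h' ∈ range H, ‖∑ n ∈ range N, ⟪u (n + h), u (n + h')⟫_ℂ‖ := by
  have hexpand : ∀ n, ‖∑ h ∈ range H, u (n + h)‖ ^ 2 =
      (∑ h ∈ range H, ∑ h' ∈ range H, ⟪u (n + h), u (n + h')⟫_ℂ).re := fun n => by
    rw [← inner_self_eq_norm_sq (𝕜 := ℂ), sum_inner]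
    simp only [inner_sum]
    rfl
  calc ∑ n ∈ range N, ‖∑ h ∈ range H, u (n + h)‖ ^ 2
      = (∑ h ∈ range H, ∑ h' ∈ range H, ∑ n ∈ range N, ⟪u (n + h), u (n + h')⟫_ℂ).re := by
        simp only [hexpand, ← Complex.re_sum]
        rw [sum_comm]
        simp only [sum_comm (s := range N)]
    _ ≤ ‖∑ h ∈ range H, ∑ h' ∈ range H, ∑ n ∈ range N, ⟪u (n + h), u (n + h')⟫_ℂ‖ :=
        Complex.re_le_norm _
    _ ≤ _ := (norm_sum_le _ _).trans (sum_le_sum fun h _ => norm_sum_le _ _)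

lemma norm_natCast_smul_sum_sub_sum_sum_le (hu : ∀ n, ‖u n‖ ≤ 1) (H N : ℕ) :
    ‖(H : ℝ) • ∑ n ∈ range N, u n - ∑ n ∈ range N, ∑ h ∈ range H, u (n + h)‖ ≤ 2 * H ^ 2 := by
  have hdiff : (H : ℝ) • ∑ n ∈ range N, u n - ∑ n ∈ range N, ∑ h ∈ range H, u (n + h) =
      ∑ h ∈ range H, (∑ n ∈ range N, u n - ∑ n ∈ range N, u (n + h)) := by
    rw [sum_sub_distrib, sum_const, card_range, Nat.cast_smul_eq_nsmul, sum_comm]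
  rw [hdiff]
  calc _ ≤ ∑ h ∈ range H, ‖∑ n ∈ range N, u n - ∑ n ∈ range N, u (n + h)‖ := norm_sum_le _ _
    _ ≤ ∑ h ∈ range H, (2 * H : ℝ) := sum_le_sum fun h hh => by
        rw [norm_sub_rev]
        exact (norm_sum_range_add_sub_sum_range_le hu h N).trans
          (by gcongr; exact (mem_range.1 hh).le)
    _ = 2 * H ^ 2 := by rw [sum_const, card_range, nsmul_eq_mul]; ring

lemma norm_sum_sum_range_add_sq_le (hu : ∀ n, ‖u n‖ ≤ 1) (H N : ℕ) :
    ‖∑ n ∈ range N, ∑ h ∈ range H, u (n + h)‖ ^ 2 ≤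
      N * ∑ h ∈ range H, ∑ h' ∈ range H, ‖∑ n ∈ range N, ⟪u (n + Nat.dist h h'), u n⟫_ℂ‖ +
        2 * N * H ^ 3 := by
  have hcauchy_schwarz : ‖∑ n ∈ range N, ∑ h ∈ range H, u (n + h)‖ ^ 2 ≤
      N * ∑ n ∈ range N, ‖∑ h ∈ range H, u (n + h)‖ ^ 2 := by
    simpa using (pow_le_pow_left₀ (norm_nonneg _) (norm_sum_le _ _) 2).trans
      (sq_sum_le_card_mul_sum_sq (s := range N) (f := fun n => ‖∑ h ∈ range H, u (n + h)‖))
  have hcorr : ∑ n ∈ range N, ‖∑ h ∈ range H, u (n + h)‖ ^ 2 ≤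
      ∑ h ∈ range H, ∑ h' ∈ range H,
        (‖∑ n ∈ range N, ⟪u (n + Nat.dist h h'), u n⟫_ℂ‖ + 2 * H) := by
    refine (sum_norm_sum_range_add_sq_le H N).trans (sum_le_sum fun h hh => sum_le_sum
      fun h' _ => (norm_sum_inner_add_le hu h h' N).trans ?_)
    gcongr
    exact (min_le_left _ _).trans (mem_range.1 hh).le
  have hconst : ∑ h ∈ range H, ∑ h' ∈ range H, (2 * H : ℝ) = 2 * H ^ 3 := by
    simp only [sum_const, card_range, nsmul_eq_mul]; ring
  rw [sum_congr rfl fun h _ => sum_add_distrib, sum_add_distrib, hconst] at hcorr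
  nlinarith

lemma sq_mul_norm_sum_sq_le (hu : ∀ n, ‖u n‖ ≤ 1) (H N : ℕ) :
    ((H : ℝ) * ‖∑ n ∈ range N, u n‖) ^ 2 ≤
      N * ∑ h ∈ range H, ∑ h' ∈ range H, ‖∑ n ∈ range N, ⟪u (n + Nat.dist h h'), u n⟫_ℂ‖ +
        6 * N * H ^ 3 := by
  set A := ∑ n ∈ range N, u n
  set W := ∑ n ∈ range N, ∑ h ∈ range H, u (n + h)
  have hwindow : ∀ n, ‖∑ h ∈ range H, u (n + h)‖ ≤ H := fun n =>
    (norm_sum_le _ _).trans (by simpa using sum_le_sum fun h (_ : h ∈ range H) => hu (n + h))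
  have hW : ‖W‖ ≤ N * H :=
    (norm_sum_le _ _).trans (by simpa using sum_le_sum fun n (_ : n ∈ range N) => hwindow n)
  have hA : H * ‖A‖ ≤ N * H := by
    rw [mul_comm]
    gcongr
    exact (norm_sum_le _ _).trans (by simpa using sum_le_sum fun n (_ : n ∈ range N) => hu n)
  have hAW : H * ‖A‖ ≤ ‖W‖ + 2 * H ^ 2 := by
    have := norm_le_norm_add_norm_sub' ((H : ℝ) • A) W
    rw [norm_smul, Real.norm_natCast] at this
    linarith [norm_natCast_smul_sum_sub_sum_sum_le hu H N]
  have hW2 := norm_sum_sum_range_add_sq_le hu H N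
  have hp : 0 ≤ H * ‖A‖ := by positivity
  -- `p := H‖A‖ ≤ ‖W‖ + r` with `r = 2H²` and `p, ‖W‖ ≤ NH` gives
  -- `p² ≤ ‖W‖² + r (p + ‖W‖) ≤ ‖W‖² + 4NH³`.
  nlinarith [mul_nonneg (sub_nonneg.2 hAW) (add_nonneg hp (norm_nonneg W)),
    mul_nonneg (sub_nonneg.2 hA) (by positivity : (0 : ℝ) ≤ 2 * H ^ 2),
    mul_nonneg (sub_nonneg.2 hW) (by positivity : (0 : ℝ) ≤ 2 * H ^ 2)]

variable (u) in
noncomputable def avgCorrelation (d N : ℕ) : ℝ :=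
  ‖(N : ℂ)⁻¹ * ∑ n ∈ range N, ⟪u (n + d), u n⟫_ℂ‖

lemma norm_sum_inner_eq_mul_avgCorrelation (d N : ℕ) :
    ‖∑ n ∈ range N, ⟪u (n + d), u n⟫_ℂ‖ = N * avgCorrelation u d N := by
  rcases N.eq_zero_or_pos with rfl | hN
  · simp
  · rw [avgCorrelation, norm_mul, norm_inv, Complex.norm_natCast, mul_inv_cancel_left₀]
    positivity

lemma avgCorrelation_le_one (hu : ∀ n, ‖u n‖ ≤ 1) (d N : ℕ) : avgCorrelation u d N ≤ 1 := by
  rw [avgCorrelation, norm_mul, norm_inv, Complex.norm_natCast]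
  exact inv_mul_le_one_of_le₀ ((norm_sum_le _ _).trans
    (by simpa using sum_le_sum fun n (_ : n ∈ range N) => norm_inner_le_one hu (n + d) n))
    N.cast_nonneg

lemma isBoundedUnder_avgCorrelation (hu : ∀ n, ‖u n‖ ≤ 1) (d : ℕ) :
    IsBoundedUnder (· ≤ ·) atTop (avgCorrelation u d) :=
  isBoundedUnder_of ⟨1, avgCorrelation_le_one hu d⟩

lemma limsup_norm_smul_sum_sq_le (hu : ∀ n, ‖u n‖ ≤ 1) {H : ℕ} (hH : 0 < H) :
    limsup (fun N : ℕ => ‖(N : ℝ)⁻¹ • ∑ n ∈ range N, u n‖ ^ 2) atTop ≤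
      ((H : ℝ)⁻¹) ^ 2 * ∑ h ∈ range H, ∑ h' ∈ range H,
        limsup (avgCorrelation u (Nat.dist h h')) atTop := by
  set T := ∑ h ∈ range H, ∑ h' ∈ range H, limsup (avgCorrelation u (Nat.dist h h')) atTop
  refine le_of_forall_pos_le_add fun δ hδ =>
    limsup_le_of_le (isCoboundedUnder_le_of_le atTop fun N => sq_nonneg _) ?_
  have hcorr : ∀ᶠ N in atTop, ∀ d ∈ range H,
      avgCorrelation u d N < limsup (avgCorrelation u d) atTop + δ / 2 :=
    (eventually_all_finset _).2 fun d _ =>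
      eventually_lt_of_limsup_lt (by linarith) (isBoundedUnder_avgCorrelation hu d)
  filter_upwards [hcorr, eventually_ge_atTop ⌈12 * H / δ⌉₊, eventually_gt_atTop 0]
    with N hN hN_large hN_pos
  have hsum : ∑ h ∈ range H, ∑ h' ∈ range H, ‖∑ n ∈ range N, ⟪u (n + Nat.dist h h'), u n⟫_ℂ‖ ≤
      N * T + N * H ^ 2 * (δ / 2) := by
    have hconst : ∑ h ∈ range H, ∑ h' ∈ range H, (N : ℝ) * (δ / 2) = N * H ^ 2 * (δ / 2) := by
      simp only [sum_const, card_range, nsmul_eq_mul]; ring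
    rw [← hconst, mul_sum, ← sum_add_distrib]
    refine sum_le_sum fun h hh => ?_
    rw [mul_sum, ← sum_add_distrib]
    refine sum_le_sum fun h' hh' => ?_
    rw [norm_sum_inner_eq_mul_avgCorrelation, ← mul_add]
    gcongr
    refine (hN _ (mem_range.2 ?_)).le
    have := mem_range.1 hh
    have := mem_range.1 hh'
    unfold Nat.dist
    omega
  have hN_ge : 12 * H / δ ≤ N := (Nat.le_ceil _).trans (by exact_mod_cast hN_large)
  rw [div_le_iff₀ hδ] at hN_ge
  have key := sq_mul_norm_sum_sq_le hu H N
  have hbound : (H : ℝ) ^ 2 * ‖∑ n ∈ range N, u n‖ ^ 2 ≤ N ^ 2 * T + N ^ 2 * H ^ 2 * δ := by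
    rw [← mul_pow]
    calc _ ≤ _ := key
      _ ≤ N * (N * T + N * H ^ 2 * (δ / 2)) + 6 * N * H ^ 3 := by gcongr
      _ ≤ _ := by nlinarith [mul_le_mul_of_nonneg_left hN_ge (by positivity : (0 : ℝ) ≤ N * H ^ 2)]
  rw [norm_smul, norm_inv, Real.norm_natCast]
  field_simp
  linarith

end Correlation

section DistanceSums

variable {γ : ℕ → ℝ}

lemma sum_range_dist_le (hγ : ∀ d, 0 ≤ γ d) {h H : ℕ} (hh : h < H) :
    ∑ h' ∈ range H, γ (Nat.dist h h') ≤ ∑ d ∈ range (h + 1), γ d + ∑ d ∈ range (H - h), γ d := by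
  rw [← sum_range_add_sum_Ico _ hh.le]
  gcongr
  · calc ∑ h' ∈ range h, γ (Nat.dist h h') ≤ ∑ h' ∈ range (h + 1), γ (Nat.dist h h') :=
          sum_le_sum_of_subset_of_nonneg (range_mono h.le_succ) fun _ _ _ => hγ _
      _ = ∑ d ∈ range (h + 1), γ d := by
          rw [← sum_range_reflect]
          refine sum_congr rfl fun d hd => ?_
          rw [Nat.dist_eq_sub_of_le_right (by omega)]
          congr 1
          have := mem_range.1 hd
          omega
  · rw [sum_Ico_eq_sum_range]
    refine le_of_eq (sum_congr rfl fun d _ => ?_)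
    rw [Nat.dist_eq_sub_of_le (Nat.le_add_right h d), Nat.add_sub_cancel_left]

lemma exists_sum_range_le_mul_add (hγ : ∀ d, 0 ≤ γ d) {L : ℝ}
    (hL : ∀ᶠ k : ℕ in atTop, (k : ℝ)⁻¹ * ∑ d ∈ range k, γ d < L) :
    ∃ C, ∀ k : ℕ, ∑ d ∈ range k, γ d ≤ L * k + C := by
  obtain ⟨K, hK⟩ := eventually_atTop.1 (hL.and (eventually_gt_atTop 0))
  have hL0 : 0 ≤ L :=
    (mul_nonneg (inv_nonneg.2 K.cast_nonneg) (sum_nonneg fun d _ => hγ d)).trans (hK K le_rfl).1.le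
  refine ⟨∑ d ∈ range K, γ d, fun k => ?_⟩
  rcases le_total K k with hKk | hkK
  · have hk : (0 : ℝ) < k := by exact_mod_cast (hK k hKk).2
    have hlt := (inv_mul_lt_iff₀ hk).1 (hK k hKk).1
    have hC : 0 ≤ ∑ d ∈ range K, γ d := sum_nonneg fun d _ => hγ d
    linarith
  · have hmono := sum_le_sum_of_subset_of_nonneg (range_mono hkK) fun d _ _ => hγ d
    have : 0 ≤ L * k := by positivity
    linarith

lemma eventually_sum_sum_dist_le (hγ : ∀ d, 0 ≤ γ d) {L : ℝ}
    (hL : ∀ᶠ k : ℕ in atTop, (k : ℝ)⁻¹ * ∑ d ∈ range k, γ d < L) {ε : ℝ} (hε : 0 < ε) :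
    ∀ᶠ H : ℕ in atTop,
      ((H : ℝ)⁻¹) ^ 2 * ∑ h ∈ range H, ∑ h' ∈ range H, γ (Nat.dist h h') ≤ L + ε := by
  obtain ⟨C, hC⟩ := exists_sum_range_le_mul_add hγ hL
  filter_upwards [eventually_ge_atTop ⌈(L + 2 * C) / ε⌉₊, eventually_gt_atTop 0]
    with H hH_large hH_pos
  have hHr : (0 : ℝ) < H := by exact_mod_cast hH_pos
  have hrow : ∀ h ∈ range H, ∑ h' ∈ range H, γ (Nat.dist h h') ≤ L * (H + 1) + 2 * C := by
    intro h hh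
    have hh := mem_range.1 hh
    refine (sum_range_dist_le hγ hh).trans ?_
    have h1 := hC (h + 1)
    have h2 := hC (H - h)
    rw [Nat.cast_sub hh.le] at h2
    push_cast at h1
    linarith
  have hH_ge : (L + 2 * C) / ε ≤ H := (Nat.le_ceil _).trans (by exact_mod_cast hH_large)
  rw [div_le_iff₀ hε] at hH_ge
  calc ((H : ℝ)⁻¹) ^ 2 * ∑ h ∈ range H, ∑ h' ∈ range H, γ (Nat.dist h h')
      ≤ ((H : ℝ)⁻¹) ^ 2 * (H * (L * (H + 1) + 2 * C)) := by
        gcongr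
        exact (sum_le_sum hrow).trans_eq (by rw [sum_const, card_range, nsmul_eq_mul])
    _ = L + (L + 2 * C) / H := by field_simp; ring
    _ ≤ L + ε := by gcongr; rw [div_le_iff₀ hHr]; linarith

end DistanceSums

/-- The van der Corput lemma: for a sequence `(uₙ)` of vectors of norm at most
`1` in a Hilbert space, with `γ h = limsup_N |(1/N) ∑_{n<N} ⟨u_{n+h}, uₙ⟩|`,
the limsup of `‖(1/N) ∑_{n<N} uₙ‖²` is at most `limsup_H (1/H) ∑_{h<H} γ h`. -/
theorem van_der_corput
    {E : Type*} [NormedAddCommGroup E] [InnerProductSpace ℂ E]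
    (u : ℕ → E) (hu : ∀ n, ‖u n‖ ≤ 1)
    (γ : ℕ → ℝ)
    (hγ : ∀ h : ℕ, γ h =
      limsup (fun N : ℕ =>
        ‖(N : ℂ)⁻¹ * ∑ n ∈ range N, (inner ℂ (u (n + h)) (u n) : ℂ)‖)
        atTop) :
    limsup (fun N : ℕ => ‖(N : ℝ)⁻¹ • ∑ n ∈ range N, u n‖ ^ 2) atTop ≤
      limsup (fun H : ℕ => (H : ℝ)⁻¹ * ∑ h ∈ range H, γ h) atTop := by
  have hγ' : ∀ d, γ d = limsup (avgCorrelation u d) atTop := hγ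
  have hγ_nonneg : ∀ d, 0 ≤ γ d := fun d => (hγ' d).symm ▸
    le_limsup_of_frequently_le (Frequently.of_forall fun N => norm_nonneg _)
      (isBoundedUnder_avgCorrelation hu d)
  have hγ_le_one : ∀ d, γ d ≤ 1 := fun d => (hγ' d).symm ▸
    limsup_le_of_le (isCoboundedUnder_le_of_le atTop fun N => norm_nonneg _)
      (Eventually.of_forall (avgCorrelation_le_one hu d))
  have hmean_bdd : IsBoundedUnder (· ≤ ·) atTop fun H : ℕ => (H : ℝ)⁻¹ * ∑ h ∈ range H, γ h :=
    isBoundedUnder_of ⟨1, fun H => inv_mul_le_one_of_le₀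
      (by simpa using sum_le_sum fun h (_ : h ∈ range H) => hγ_le_one h) H.cast_nonneg⟩
  refine le_of_forall_pos_le_add fun ε hε => ?_
  obtain ⟨H, hH, hH_pos⟩ := ((eventually_sum_sum_dist_le hγ_nonneg
    (eventually_lt_of_limsup_lt (lt_add_of_pos_right _ (half_pos hε)) hmean_bdd)
    (half_pos hε)).and (eventually_gt_atTop 0)).exists
  calc limsup (fun N : ℕ => ‖(N : ℝ)⁻¹ • ∑ n ∈ range N, u n‖ ^ 2) atTop
      ≤ ((H : ℝ)⁻¹) ^ 2 * ∑ h ∈ range H, ∑ h' ∈ range H, γ (Nat.dist h h') := by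
        simpa only [hγ'] using limsup_norm_smul_sum_sq_le hu hH_pos
    _ ≤ _ := hH
    _ = _ := by ring
end

section
/- Given any set E ⊆ ℤ with positive upper Banach density, there exist a measure preserving system (X, 𝒳, μ, T) and a set A ∈ 𝒳 with μ(A) = d*(E) such that μ(T^{-m₁}A ∩ ⋯ ∩ T^{-m_k}A) ≤ d*((E+m₁) ∩ ⋯ ∩ (E+m_k)) for all k ∈ ℕ and all m₁, …, m_k ∈ ℤ. -/
open MeasureTheory Filter

open scoped Classical in
/-- The upper density `d*(E) = limsup_N |E ∩ {1,…,N}| / N` of a set of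
integers. -/
noncomputable def upperDensity (E : Set ℤ) : ℝ :=
  limsup (fun N : ℕ =>
    (((Finset.Icc (1 : ℤ) (N : ℤ)).filter (· ∈ E)).card : ℝ) / (N : ℝ)) atTop

open scoped Classical

noncomputable section FCaux

open Topology

namespace FCaux

/-- The shift space. -/
abbrev X : Type := ℤ → Bool

/-- The shift map. -/
def T : Equiv.Perm X :=
  { toFun := fun x k => x (k - 1)
    invFun := fun x k => x (k + 1)
    left_inv := fun x => by funext k; simp
    right_inv := fun x => by funext k; simp }

lemma T_apply (x : X) (k : ℤ) : T x k = x (k - 1) := rfl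

lemma T_symm_apply (x : X) (k : ℤ) : T.symm x k = x (k + 1) := rfl

lemma T_zpow_apply' (m : ℤ) : ∀ (x : X) (k : ℤ), (T ^ m) x k = x (k - m) := by
  induction m using Int.induction_on with
  | zero => simp
  | succ n ih =>
    intro x k
    have h : T ^ ((n : ℤ) + 1) = T ^ (n : ℤ) * T := by rw [zpow_add_one]
    rw [h, Equiv.Perm.mul_apply, ih, T_apply]
    congr 1; ring
  | pred n ih =>
    intro x k
    have h : T ^ (-(n : ℤ) - 1) = T ^ (-(n : ℤ)) * T⁻¹ := by rw [zpow_sub_one]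
    rw [h, Equiv.Perm.mul_apply]
    have hsymm : (T⁻¹ : Equiv.Perm X) x = T.symm x := rfl
    rw [hsymm, ih, T_symm_apply]
    congr 1; ring

lemma T_zpow_apply (m : ℤ) (x : X) (k : ℤ) : (T ^ m) x k = x (k - m) :=
  T_zpow_apply' m x k

lemma T_continuous : Continuous (T : X → X) := by
  exact continuous_pi fun k => continuous_apply (k - 1)

lemma T_symm_continuous : Continuous (T.symm : X → X) := by
  exact continuous_pi fun k => continuous_apply (k + 1)

/-- The shift as a homeomorphism. -/
def Th : X ≃ₜ X := { T with continuous_toFun := T_continuous, continuous_invFun := T_symm_continuous }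

variable (E : Set ℤ)

/-- Orbit points. -/
def p (n : ℤ) : X := fun k => decide ((n + k) ∈ E)

/-- The cylinder set. -/
def A : Set X := {x | x 0 = true}

lemma isOpen_A : IsOpen (A) := by
  have : A = (fun x : X => x 0) ⁻¹' {true} := rfl
  rw [this]
  exact (continuous_apply (0 : ℤ)).isOpen_preimage _ (isOpen_discrete _)

lemma isClosed_A : IsClosed (A) := by
  have : A = (fun x : X => x 0) ⁻¹' {true} := rfl
  rw [this]
  exact IsClosed.preimage (continuous_apply (0 : ℤ)) (isClosed_discrete _)

lemma mem_A_iff (n : ℤ) : p E n ∈ A ↔ n ∈ E := by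
  simp [A, p]

lemma mem_pre_iff (m n : ℤ) : p E n ∈ (T ^ m) ⁻¹' A ↔ n - m ∈ E := by
  simp only [Set.mem_preimage, A, Set.mem_setOf_eq, T_zpow_apply, p, zero_sub,
    decide_eq_true_eq, sub_eq_add_neg, zero_add]

/-- counting function -/
def cnt (S : Set X) (N : ℕ) : ℕ :=
  ((Finset.Icc (1 : ℤ) (N : ℤ)).filter (fun n => p E n ∈ S)).card

/-- empirical density -/
def dens (S : Set X) (N : ℕ) : ℝ := (cnt E S N : ℝ) / (N : ℝ)

lemma card_Icc_int (N : ℕ) : (Finset.Icc (1 : ℤ) (N : ℤ)).card = N := by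
  rw [Int.card_Icc]
  simp

lemma cnt_le (S : Set X) (N : ℕ) : cnt E S N ≤ N := by
  calc cnt E S N ≤ (Finset.Icc (1 : ℤ) (N : ℤ)).card := Finset.card_filter_le _ _
    _ = N := card_Icc_int N

lemma dens_nonneg (S : Set X) (N : ℕ) : 0 ≤ dens E S N := by
  apply div_nonneg <;> positivity

lemma dens_le_one (S : Set X) (N : ℕ) : dens E S N ≤ 1 := by
  rcases Nat.eq_zero_or_pos N with h | h
  · simp [dens, h]
  · rw [dens, div_le_one (by exact_mod_cast h)]
    exact_mod_cast cnt_le E S N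

lemma dens_mem_Icc (S : Set X) (N : ℕ) : dens E S N ∈ Set.Icc (0 : ℝ) 1 :=
  ⟨dens_nonneg E S N, dens_le_one E S N⟩

lemma cnt_mono {S S' : Set X} (h : S ⊆ S') (N : ℕ) : cnt E S N ≤ cnt E S' N := by
  apply Finset.card_le_card
  intro n hn
  rw [Finset.mem_filter] at hn ⊢
  exact ⟨hn.1, h hn.2⟩

lemma dens_mono {S S' : Set X} (h : S ⊆ S') (N : ℕ) : dens E S N ≤ dens E S' N := by
  rcases Nat.eq_zero_or_pos N with h0 | h0
  · simp [dens, h0]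
  · rw [dens, dens, div_le_div_iff_of_pos_right (by exact_mod_cast h0)]
    exact_mod_cast cnt_mono E h N

lemma dens_univ (N : ℕ) (hN : 1 ≤ N) : dens E Set.univ N = 1 := by
  have hc : cnt E Set.univ N = N := by
    refine le_antisymm (cnt_le E _ N) ?_
    have hsub : Finset.Icc (1 : ℤ) (N : ℤ) ⊆
        (Finset.Icc (1 : ℤ) (N : ℤ)).filter (fun n => p E n ∈ (Set.univ : Set X)) :=
      fun n hn => Finset.mem_filter.mpr ⟨hn, Set.mem_univ _⟩
    calc N = (Finset.Icc (1 : ℤ) (N : ℤ)).card := (card_Icc_int N).symm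
      _ ≤ cnt E Set.univ N := by
          have hle := Finset.card_le_card hsub
          simpa [cnt, Finset.filter_congr_decidable] using hle
  have hNpos : (0 : ℝ) < N := by exact_mod_cast Nat.lt_of_lt_of_le Nat.zero_lt_one hN
  rw [dens, hc, div_self hNpos.ne']

lemma cnt_union_disjoint {S S' : Set X} (h : Disjoint S S') (N : ℕ) :
    cnt E (S ∪ S') N = cnt E S N + cnt E S' N := by
  unfold cnt
  simp only [Set.mem_union, Finset.filter_or]
  apply Finset.card_union_of_disjoint
  rw [Finset.disjoint_filter]
  intro n _ hS hS'
  exact h.ne_of_mem hS hS' rfl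

lemma dens_union_disjoint {S S' : Set X} (h : Disjoint S S') (N : ℕ) :
    dens E (S ∪ S') N = dens E S N + dens E S' N := by
  unfold dens
  rw [cnt_union_disjoint E h, Nat.cast_add, add_div]

lemma dens_union_le (S S' : Set X) (N : ℕ) :
    dens E (S ∪ S') N ≤ dens E S N + dens E S' N := by
  rcases Nat.eq_zero_or_pos N with h0 | h0
  · simp [dens, h0]
  have hNpos : (0 : ℝ) < N := by exact_mod_cast h0
  have hcnt : cnt E (S ∪ S') N ≤ cnt E S N + cnt E S' N := by
    unfold cnt
    simp only [Set.mem_union, Finset.filter_or]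
    exact Finset.card_union_le _ _
  rw [dens, dens, dens, ← add_div, div_le_div_iff_of_pos_right hNpos]
  exact_mod_cast hcnt

/-- Generic counting lemma for shifted predicates. -/
lemma card_filter_shift (q : ℤ → Prop) (N : ℕ) :
    ((Finset.Icc (1 : ℤ) (N : ℤ)).filter (fun n => q (n + 1))).card ≤
      ((Finset.Icc (1 : ℤ) (N : ℤ)).filter q).card + 1 ∧
    ((Finset.Icc (1 : ℤ) (N : ℤ)).filter q).card ≤
      ((Finset.Icc (1 : ℤ) (N : ℤ)).filter (fun n => q (n + 1))).card + 1 := by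
  constructor
  · have : ((Finset.Icc (1 : ℤ) (N : ℤ)).filter (fun n => q (n + 1))).card ≤
        (insert ((N : ℤ) + 1) ((Finset.Icc (1 : ℤ) (N : ℤ)).filter q)).card := by
      apply Finset.card_le_card_of_injOn (fun n => n + 1)
      · intro n hn
        simp only [Finset.mem_coe] at hn ⊢
        rw [Finset.mem_filter, Finset.mem_Icc] at hn
        rcases eq_or_lt_of_le hn.1.2 with heq | hlt
        · rw [heq]; exact Finset.mem_insert_self _ _
        · apply Finset.mem_insert_of_mem
          rw [Finset.mem_filter, Finset.mem_Icc]
          exact ⟨⟨by omega, by omega⟩, hn.2⟩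
      · intro a _ b _ hab; dsimp at hab; omega
    calc _ ≤ _ := this
      _ ≤ _ := Finset.card_insert_le _ _
  · have : ((Finset.Icc (1 : ℤ) (N : ℤ)).filter q).card ≤
        (insert (0 : ℤ) ((Finset.Icc (1 : ℤ) (N : ℤ)).filter (fun n => q (n + 1)))).card := by
      apply Finset.card_le_card_of_injOn (fun n => n - 1)
      · intro n hn
        simp only [Finset.mem_coe] at hn ⊢
        rw [Finset.mem_filter, Finset.mem_Icc] at hn
        rcases eq_or_lt_of_le hn.1.1 with heq | hlt
        · rw [← heq]; norm_num
        · apply Finset.mem_insert_of_mem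
          rw [Finset.mem_filter, Finset.mem_Icc]
          refine ⟨⟨by omega, by omega⟩, ?_⟩
          have : n - 1 + 1 = n := by ring
          rw [this]; exact hn.2
      · intro a _ b _ hab; dsimp at hab; omega
    calc _ ≤ _ := this
      _ ≤ _ := Finset.card_insert_le _ _

lemma mem_image_T_iff (S : Set X) (n : ℤ) : p E n ∈ (T : X → X) '' S ↔ p E (n + 1) ∈ S := by
  rw [Set.mem_image_equiv]
  have : T.symm (p E n) = p E (n + 1) := by
    funext k
    rw [T_symm_apply]
    show decide ((n + (k + 1)) ∈ E) = decide ((n + 1 + k) ∈ E)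
    have harith : n + (k + 1) = n + 1 + k := by ring
    rw [harith]
  rw [this]

lemma abs_dens_image_T_sub_le (S : Set X) (N : ℕ) :
    |dens E ((T : X → X) '' S) N - dens E S N| ≤ 1 / (N : ℝ) := by
  rcases Nat.eq_zero_or_pos N with h0 | h0
  · simp [dens, h0]
  have hNpos : (0 : ℝ) < N := by exact_mod_cast h0
  have hcongr : cnt E ((T : X → X) '' S) N =
      ((Finset.Icc (1 : ℤ) (N : ℤ)).filter (fun n => p E (n + 1) ∈ S)).card := by
    unfold cnt
    congr 1
    apply Finset.filter_congr
    intro n _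
    exact mem_image_T_iff E S n
  obtain ⟨hub, hlb⟩ := card_filter_shift (fun n => p E n ∈ S) N
  have h1 : (cnt E ((T : X → X) '' S) N : ℝ) ≤ (cnt E S N : ℝ) + 1 := by
    rw [hcongr]; exact_mod_cast hub
  have h2 : (cnt E S N : ℝ) ≤ (cnt E ((T : X → X) '' S) N : ℝ) + 1 := by
    rw [hcongr]; exact_mod_cast hlb
  rw [dens, dens, div_sub_div_same, abs_div, abs_of_nonneg hNpos.le,
    div_le_div_iff_of_pos_right hNpos]
  rw [abs_le]
  constructor <;> linarith

/-- Continuity of the powers of the shift. -/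
lemma T_zpow_coe (m : ℤ) : ((T ^ m : Equiv.Perm X) : X → X) = fun x k => x (k - m) :=
  funext fun x => funext fun k => T_zpow_apply m x k

lemma T_zpow_continuous (m : ℤ) : Continuous ((T ^ m : Equiv.Perm X) : X → X) := by
  rw [T_zpow_coe]
  exact continuous_pi fun k => continuous_apply (k - m)

/-- `dens` of `A` agrees with the sequence defining `upperDensity`. -/
lemma dens_eq_of_iff {S : Set X} {G : Set ℤ} (h : ∀ n : ℤ, p E n ∈ S ↔ n ∈ G) (N : ℕ) :
    dens E S N = (((Finset.Icc (1 : ℤ) (N : ℤ)).filter (· ∈ G)).card : ℝ) / (N : ℝ) := by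
  unfold dens cnt
  have h1 : (Finset.Icc (1 : ℤ) (N : ℤ)).filter (fun n => p E n ∈ S) =
      (Finset.Icc (1 : ℤ) (N : ℤ)).filter (· ∈ G) :=
    Finset.filter_congr (fun n _ => by simp only [h n])
  rw [h1]

/-- Extraction of a subsequence tending to the limsup. -/
lemma exists_tendsto_limsup {u : ℕ → ℝ} (h0 : ∀ n, 0 ≤ u n) (h1 : ∀ n, u n ≤ 1) :
    ∃ L : ℕ → ℕ, StrictMono L ∧ (∀ j, 1 ≤ L j) ∧
      Tendsto (fun j => u (L j)) atTop (𝓝 (limsup u atTop)) := by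
  set ℓ := limsup u atTop with hℓ
  have hbdd : IsBoundedUnder (· ≤ ·) atTop u := isBoundedUnder_of ⟨1, h1⟩
  have hbdd' : IsBoundedUnder (· ≥ ·) atTop u := isBoundedUnder_of ⟨0, h0⟩
  have hcob : IsCoboundedUnder (· ≤ ·) atTop u := hbdd'.isCoboundedUnder_le
  have hfreq : ∀ j : ℕ, ∃ᶠ N in atTop,
      (ℓ - 1 / ((j : ℝ) + 1) < u N ∧ u N < ℓ + 1 / ((j : ℝ) + 1)) ∧ 1 ≤ N := by
    intro j
    have hpos : (0 : ℝ) < 1 / ((j : ℝ) + 1) := by positivity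
    have hf1 : ∃ᶠ N in atTop, ℓ - 1 / ((j : ℝ) + 1) < u N :=
      frequently_lt_of_lt_limsup hcob (by rw [← hℓ]; linarith)
    have hf2 : ∀ᶠ N in atTop, u N < ℓ + 1 / ((j : ℝ) + 1) :=
      eventually_lt_of_limsup_lt (by rw [← hℓ]; linarith) hbdd
    exact (hf1.and_eventually (hf2.and (eventually_ge_atTop 1))).mono
      (fun N hN => ⟨⟨hN.1, hN.2.1⟩, hN.2.2⟩)
  obtain ⟨L, hLmono, hP⟩ := extraction_forall_of_frequently hfreq
  refine ⟨L, hLmono, fun j => (hP j).2, ?_⟩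
  have haux : Tendsto (fun j : ℕ => 1 / ((j : ℝ) + 1)) atTop (𝓝 0) :=
    tendsto_one_div_add_atTop_nhds_zero_nat
  have hlow : Tendsto (fun j : ℕ => ℓ - 1 / ((j : ℝ) + 1)) atTop (𝓝 ℓ) := by
    have := tendsto_const_nhds (x := ℓ) (f := atTop (α := ℕ)) |>.sub haux
    simpa using this
  have hhigh : Tendsto (fun j : ℕ => ℓ + 1 / ((j : ℝ) + 1)) atTop (𝓝 ℓ) := by
    have := tendsto_const_nhds (x := ℓ) (f := atTop (α := ℕ)) |>.add haux
    simpa using this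
  exact tendsto_of_tendsto_of_tendsto_of_le_of_le hlow hhigh
    (fun j => (hP j).1.1.le) (fun j => (hP j).1.2.le)

end FCaux

end FCaux

/-- Furstenberg's Correspondence Principle: given `E ⊆ ℤ` of positive upper
density, there are a measure preserving system `(X, μ, T)` and a measurable set
`A` with `μ(A) = d*(E)` such that
`μ(T^{-m₁}A ∩ ⋯ ∩ T^{-m_k}A) ≤ d*((E+m₁) ∩ ⋯ ∩ (E+m_k))` for all `k` and all
integers `m₁, …, m_k`. -/
theorem furstenberg_correspondence (E : Set ℤ) (hE : 0 < upperDensity E) :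
    ∃ (X : Type) (_ : MeasurableSpace X) (μ : Measure X) (T : Equiv.Perm X),
      IsProbabilityMeasure μ ∧ MeasurePreserving T μ μ ∧
      ∃ A : Set X, MeasurableSet A ∧ (μ A).toReal = upperDensity E ∧
        ∀ (k : ℕ) (m : Fin k → ℤ),
          (μ (⋂ i : Fin k, ((T ^ (m i) : Equiv.Perm X)) ⁻¹' A)).toReal ≤
            upperDensity (⋂ i : Fin k, (fun z : ℤ => z + m i) '' E) := by
  classical
  -- the sequence defining the upper density of `E`
  set u : ℕ → ℝ := fun N =>
    (((Finset.Icc (1 : ℤ) (N : ℤ)).filter (· ∈ E)).card : ℝ) / (N : ℝ) with hu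
  have hdensA : ∀ N, FCaux.dens E FCaux.A N = u N := fun N =>
    FCaux.dens_eq_of_iff E (fun n => FCaux.mem_A_iff E n) N
  have hu0 : ∀ N, 0 ≤ u N := fun N => (hdensA N) ▸ FCaux.dens_nonneg E _ N
  have hu1 : ∀ N, u N ≤ 1 := fun N => (hdensA N) ▸ FCaux.dens_le_one E _ N
  have hUD : upperDensity E = limsup u atTop := rfl
  obtain ⟨L, hLmono, hL1, hLtend⟩ := FCaux.exists_tendsto_limsup hu0 hu1
  set V : Ultrafilter ℕ := Ultrafilter.of atTop with hVdef
  have hVle : (V : Filter ℕ) ≤ atTop := Ultrafilter.of_le _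
  -- the ultrafilter-limit density functional
  have key : ∀ S : Set FCaux.X, ∃ a : ℝ, 0 ≤ a ∧ a ≤ 1 ∧
      Tendsto (fun j => FCaux.dens E S (L j)) (V : Filter ℕ) (nhds a) := by
    intro S
    have hle : (V.map (fun j => FCaux.dens E S (L j)) : Filter ℝ)
        ≤ Filter.principal (Set.Icc (0 : ℝ) 1) := by
      rw [Ultrafilter.coe_map, le_principal_iff, mem_map]
      exact Filter.univ_mem' (fun j => FCaux.dens_mem_Icc E S (L j))
    obtain ⟨a, haI, ha⟩ := isCompact_Icc.ultrafilter_le_nhds _ hle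
    refine ⟨a, haI.1, haI.2, ?_⟩
    rwa [Filter.Tendsto, ← Ultrafilter.coe_map]
  choose ν hν0 hν1 hνt using key
  have hν_mono : ∀ {S S' : Set FCaux.X}, S ⊆ S' → ν S ≤ ν S' := by
    intro S S' h
    exact le_of_tendsto_of_tendsto' (hνt S) (hνt S') (fun j => FCaux.dens_mono E h (L j))
  have hν_add : ∀ {S S' : Set FCaux.X}, Disjoint S S' → ν (S ∪ S') = ν S + ν S' := by
    intro S S' h
    refine tendsto_nhds_unique (hνt (S ∪ S')) ?_
    have heq : (fun j => FCaux.dens E (S ∪ S') (L j))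
        = fun j => FCaux.dens E S (L j) + FCaux.dens E S' (L j) :=
      funext fun j => FCaux.dens_union_disjoint E h (L j)
    rw [heq]
    exact (hνt S).add (hνt S')
  have hν_union_le : ∀ (S S' : Set FCaux.X), ν (S ∪ S') ≤ ν S + ν S' := by
    intro S S'
    exact le_of_tendsto_of_tendsto' (hνt (S ∪ S')) ((hνt S).add (hνt S'))
      (fun j => FCaux.dens_union_le E S S' (L j))
  have hν_univ : ν Set.univ = 1 := by
    refine tendsto_nhds_unique (hνt Set.univ) ?_
    have heq : (fun j => FCaux.dens E Set.univ (L j)) = fun _ => (1 : ℝ) :=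
      funext fun j => FCaux.dens_univ E (L j) (hL1 j)
    rw [heq]
    exact tendsto_const_nhds
  have hν_T : ∀ S : Set FCaux.X, ν ((FCaux.T : FCaux.X → FCaux.X) '' S) = ν S := by
    intro S
    have h1 := hνt ((FCaux.T : FCaux.X → FCaux.X) '' S)
    have h2 := hνt S
    have hdiff : Tendsto (fun j => FCaux.dens E ((FCaux.T : FCaux.X → FCaux.X) '' S) (L j)
        - FCaux.dens E S (L j)) (V : Filter ℕ) (nhds 0) := by
      apply squeeze_zero_norm (a := fun j => 1 / ((L j : ℕ) : ℝ))
      · intro j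
        rw [Real.norm_eq_abs]
        exact FCaux.abs_dens_image_T_sub_le E S (L j)
      · have hL : Tendsto L atTop atTop := hLmono.tendsto_atTop
        have : Tendsto (fun j => 1 / ((L j : ℕ) : ℝ)) atTop (nhds 0) :=
          (tendsto_one_div_atTop_nhds_zero_nat).comp hL
        exact this.mono_left hVle
    have h3 := h1.sub h2
    have h0 := tendsto_nhds_unique h3 hdiff
    linarith
  -- the Borel σ-algebra and the content
  letI : MeasurableSpace FCaux.X := borel _
  haveI : BorelSpace FCaux.X := ⟨rfl⟩
  set κ : MeasureTheory.Content FCaux.X :=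
    { toFun := fun K => Real.toNNReal (ν (K : Set FCaux.X))
      mono' := fun K₁ K₂ h => Real.toNNReal_le_toNNReal (hν_mono h)
      sup_disjoint' := fun K₁ K₂ hd _ _ => by
        show Real.toNNReal (ν ((K₁ : Set FCaux.X) ∪ (K₂ : Set FCaux.X))) = _
        rw [hν_add hd, Real.toNNReal_add (hν0 _) (hν0 _)]
      sup_le' := fun K₁ K₂ => by
        show Real.toNNReal (ν ((K₁ : Set FCaux.X) ∪ (K₂ : Set FCaux.X))) ≤ _
        calc Real.toNNReal (ν ((K₁ : Set FCaux.X) ∪ (K₂ : Set FCaux.X)))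
            ≤ Real.toNNReal (ν (K₁ : Set FCaux.X) + ν (K₂ : Set FCaux.X)) :=
              Real.toNNReal_le_toNNReal (hν_union_le _ _)
          _ ≤ _ := Real.toNNReal_add_le } with hκ
  set μ : Measure FCaux.X := κ.measure with hμ
  -- evaluation of μ on clopen sets
  have heval : ∀ S : Set FCaux.X, IsOpen S → IsClosed S →
      μ S = ENNReal.ofReal (ν S) := by
    intro S ho hc
    have hK : IsCompact S := hc.isCompact
    rw [hμ, MeasureTheory.Content.measure_apply κ ho.measurableSet]
    have h1 : κ.outerMeasure S = κ.innerContent ⟨S, ho⟩ := κ.outerMeasure_opens ⟨S, ho⟩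
    have h2 : κ.innerContent ⟨S, ho⟩ = κ ⟨S, hK⟩ := κ.innerContent_of_isCompact hK ho
    rw [h1, h2]
    rfl
  haveI hprob : IsProbabilityMeasure μ := by
    constructor
    rw [heval _ isOpen_univ isClosed_univ, hν_univ]
    simp
  -- measure preservation
  have hTmeas : Measurable (FCaux.T : FCaux.X → FCaux.X) := FCaux.T_continuous.measurable
  have houter : ∀ s : Set FCaux.X,
      κ.outerMeasure ((FCaux.T : FCaux.X → FCaux.X) ⁻¹' s) = κ.outerMeasure s := by
    intro s
    refine κ.outerMeasure_preimage FCaux.Th ?_ s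
    intro K
    have hcoe : ((K.map FCaux.Th FCaux.Th.continuous : TopologicalSpace.Compacts FCaux.X)
        : Set FCaux.X) = (FCaux.T : FCaux.X → FCaux.X) '' (K : Set FCaux.X) := by
      rw [TopologicalSpace.Compacts.coe_map]
      rfl
    have htoFun : κ.toFun (K.map FCaux.Th FCaux.Th.continuous) = κ.toFun K := by
      show Real.toNNReal (ν _) = Real.toNNReal (ν _)
      rw [hcoe, hν_T]
    show ((κ.toFun _ : NNReal) : ENNReal) = ((κ.toFun K : NNReal) : ENNReal)
    exact_mod_cast htoFun
  have hMP : MeasurePreserving (FCaux.T : Equiv.Perm FCaux.X) μ μ := by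
    refine ⟨hTmeas, ?_⟩
    ext s hs
    rw [Measure.map_apply hTmeas hs, hμ,
      MeasureTheory.Content.measure_apply κ (hTmeas hs),
      MeasureTheory.Content.measure_apply κ hs, houter s]
  refine ⟨FCaux.X, inferInstance, μ, FCaux.T, hprob, hMP, FCaux.A,
    (FCaux.isOpen_A).measurableSet, ?_, ?_⟩
  · -- μ A = d*(E)
    have hνA : ν FCaux.A = upperDensity E := by
      refine tendsto_nhds_unique (hνt FCaux.A) ?_
      have heq2 : (fun j => FCaux.dens E FCaux.A (L j)) = fun j => u (L j) :=
        funext fun j => hdensA (L j)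
      rw [heq2, hUD]
      exact hLtend.mono_left hVle
    rw [heval FCaux.A FCaux.isOpen_A FCaux.isClosed_A,
      ENNReal.toReal_ofReal (hν0 _), hνA]
  · -- the correspondence inequality
    intro k m
    set S : Set FCaux.X := ⋂ i : Fin k,
      ((FCaux.T ^ (m i) : Equiv.Perm FCaux.X)) ⁻¹' FCaux.A with hS
    have hSo : IsOpen S := isOpen_iInter_of_finite fun i =>
      (FCaux.isOpen_A).preimage (FCaux.T_zpow_continuous (m i))
    have hSc : IsClosed S := isClosed_iInter fun i =>
      (FCaux.isClosed_A).preimage (FCaux.T_zpow_continuous (m i))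
    rw [heval S hSo hSc, ENNReal.toReal_ofReal (hν0 S)]
    set G : Set ℤ := ⋂ i : Fin k, (fun z : ℤ => z + m i) '' E with hG
    have hiff : ∀ n : ℤ, FCaux.p E n ∈ S ↔ n ∈ G := by
      intro n
      rw [hS, hG]
      simp only [Set.mem_iInter]
      refine forall_congr' fun i => ?_
      rw [FCaux.mem_pre_iff E (m i) n]
      constructor
      · intro h
        exact ⟨n - m i, h, by ring⟩
      · rintro ⟨z, hz, hzn⟩
        simp only at hzn
        have hzz : n - m i = z := by omega
        rwa [hzz]
    set w : ℕ → ℝ := fun N =>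
      (((Finset.Icc (1 : ℤ) (N : ℤ)).filter (· ∈ G)).card : ℝ) / (N : ℝ) with hw
    have hweq : ∀ N, FCaux.dens E S N = w N := fun N => FCaux.dens_eq_of_iff E hiff N
    have hUDG : upperDensity G = limsup w atTop := rfl
    rw [hUDG]
    set F : Filter ℕ := Filter.map L (V : Filter ℕ) with hF
    haveI hFne : F.NeBot := by rw [hF]; exact Filter.map_neBot
    have hFle : F ≤ atTop := le_trans (Filter.map_mono hVle) hLmono.tendsto_atTop
    have hwt : Tendsto w F (nhds (ν S)) := by
      rw [hF]
      apply Filter.tendsto_map'_iff.mpr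
      have h1 := hνt S
      have heq3 : (fun j => FCaux.dens E S (L j)) = w ∘ L :=
        funext fun j => hweq (L j)
      rwa [heq3] at h1
    have h1 : ν S = limsup w F := (hwt.limsup_eq).symm
    rw [h1]
    have hcob : IsCoboundedUnder (· ≤ ·) F w := by
      refine IsBoundedUnder.isCoboundedUnder_le (isBoundedUnder_of ⟨0, fun N => ?_⟩)
      rw [← hweq N]
      exact FCaux.dens_nonneg E S N
    have hbddw : IsBoundedUnder (· ≤ ·) atTop w := by
      refine isBoundedUnder_of ⟨1, fun N => ?_⟩
      rw [← hweq N]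
      exact FCaux.dens_le_one E S N
    exact limsup_le_limsup_of_le hFle hcob hbddw
end

section
/- Assume the multiple recurrence property: for every measure preserving system (X, 𝒳, μ, T), every A ∈ 𝒳 with μ(A) > 0 and every k ≥ 1, there exists n ∈ ℕ with μ(A ∩ T⁻ⁿA ∩ T⁻²ⁿA ∩ ⋯ ∩ T^{-kn}A) > 0. Then every set E ⊆ ℤ with positive upper density contains arithmetic progressions of every finite length. -/
open MeasureTheory Filter Set Topology
open scoped ENNReal NNReal

namespace SzHelper
open TopologicalSpace

/-- The shift on `ℤ → Bool`. -/
def T : (ℤ → Bool) → (ℤ → Bool) := fun f x => f (x + 1)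

lemma T_iterate (m : ℕ) (f : ℤ → Bool) (x : ℤ) : (T^[m] f) x = f (x + m) := by
  induction m generalizing f with
  | zero => simp
  | succ m ih =>
      rw [Function.iterate_succ_apply, ih]
      show f (x + m + 1) = f (x + (m + 1 : ℕ))
      congr 1; push_cast; ring

lemma T_continuous : Continuous T := continuous_pi fun x => continuous_apply (x + 1)

lemma T_bijective : Function.Bijective T := by
  rw [Function.bijective_iff_has_inverse]
  refine ⟨fun f x => f (x - 1), fun f => ?_, fun f => ?_⟩ <;>
    · funext x; simp [T]

open scoped Classical in
/-- Number of `j ∈ [0,N)` with `T^[j+1] ω ∈ U`. -/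
noncomputable def cnt (ω : ℤ → Bool) (N : ℕ) (U : Set (ℤ → Bool)) : ℕ :=
  ((Finset.range N).filter (fun j => T^[j+1] ω ∈ U)).card

noncomputable def cR (ω : ℤ → Bool) (N : ℕ) (U : Set (ℤ → Bool)) : ℝ :=
  (cnt ω N U : ℝ) / N

variable (ω : ℤ → Bool)

lemma cnt_le (N : ℕ) (U : Set (ℤ → Bool)) : cnt ω N U ≤ N := by
  classical
  simpa [cnt] using (Finset.card_filter_le (Finset.range N) _)

lemma cnt_mono {U V : Set (ℤ → Bool)} (h : U ⊆ V) (N : ℕ) : cnt ω N U ≤ cnt ω N V := by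
  classical
  simp only [cnt, Finset.card_filter]
  refine Finset.sum_le_sum fun j _ => ?_
  by_cases hU : T^[j+1] ω ∈ U
  · rw [if_pos hU, if_pos (h hU)]
  · rw [if_neg hU]; exact Nat.zero_le _

lemma cnt_union_le (N : ℕ) (U V : Set (ℤ → Bool)) :
    cnt ω N (U ∪ V) ≤ cnt ω N U + cnt ω N V := by
  classical
  simp only [cnt, Finset.card_filter]
  rw [← Finset.sum_add_distrib]
  refine Finset.sum_le_sum fun j _ => ?_
  simp only [Set.mem_union]
  by_cases hU : T^[j+1] ω ∈ U <;> by_cases hV : T^[j+1] ω ∈ V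
  · rw [if_pos (Or.inl hU), if_pos hU, if_pos hV]; omega
  · rw [if_pos (Or.inl hU), if_pos hU]; omega
  · rw [if_pos (Or.inr hV), if_neg hU, if_pos hV]
  · rw [if_neg (by tauto), if_neg hU, if_neg hV]

lemma cnt_union (N : ℕ) {U V : Set (ℤ → Bool)} (h : Disjoint U V) :
    cnt ω N (U ∪ V) = cnt ω N U + cnt ω N V := by
  classical
  simp only [cnt, Finset.card_filter]
  rw [← Finset.sum_add_distrib]
  refine Finset.sum_congr rfl fun j _ => ?_
  simp only [Set.mem_union]
  by_cases hU : T^[j+1] ω ∈ U <;> by_cases hV : T^[j+1] ω ∈ V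
  · exact (h.ne_of_mem hU hV rfl).elim
  · rw [if_pos (Or.inl hU), if_pos hU, if_neg hV]
  · rw [if_pos (Or.inr hV), if_neg hU, if_pos hV]
  · rw [if_neg (by tauto), if_neg hU, if_neg hV]

lemma cnt_univ (N : ℕ) : cnt ω N univ = N := by
  classical
  simp [cnt]

/-- Key counting lemma for the shift. -/
lemma card_filter_shift (p : ℕ → Prop) [DecidablePred p] (N : ℕ) :
    ((Finset.range N).filter (fun j => p (j+1))).card ≤ ((Finset.range N).filter p).card + 1 ∧
    ((Finset.range N).filter p).card ≤ ((Finset.range N).filter (fun j => p (j+1))).card + 1 := by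
  classical
  set s := (Finset.range (N+1)).filter p with hs
  have himg : ((Finset.range N).filter (fun j => p (j+1))).image (· + 1) ⊆ s := by
    intro m hm
    simp only [Finset.mem_image, Finset.mem_filter, Finset.mem_range] at hm
    obtain ⟨j, ⟨hj, hpj⟩, rfl⟩ := hm
    simp only [hs, Finset.mem_filter, Finset.mem_range]
    exact ⟨by omega, hpj⟩
  have hcard_img : (((Finset.range N).filter (fun j => p (j+1))).image (· + 1)).card
      = ((Finset.range N).filter (fun j => p (j+1))).card :=
    Finset.card_image_of_injective _ (add_left_injective 1)
  have h1 : s.card ≤ ((Finset.range N).filter p).card + 1 := by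
    rw [hs, Finset.range_add_one, Finset.filter_insert]
    split
    · exact (Finset.card_insert_le _ _)
    · omega
  have h2 : s ⊆ insert 0 (((Finset.range N).filter (fun j => p (j+1))).image (· + 1)) := by
    intro m hm
    simp only [hs, Finset.mem_filter, Finset.mem_range] at hm
    obtain ⟨hmN, hpm⟩ := hm
    rcases Nat.eq_zero_or_pos m with rfl | hm0
    · exact Finset.mem_insert_self _ _
    · refine Finset.mem_insert_of_mem ?_
      simp only [Finset.mem_image, Finset.mem_filter, Finset.mem_range]
      exact ⟨m - 1, ⟨by omega, by rwa [Nat.sub_add_cancel hm0]⟩, by omega⟩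
  have h3 : ((Finset.range N).filter p) ⊆ s := by
    refine Finset.filter_subset_filter _ ?_
    intro j hj; simp only [Finset.mem_range] at hj ⊢; omega
  constructor
  · calc ((Finset.range N).filter (fun j => p (j+1))).card
        = (((Finset.range N).filter (fun j => p (j+1))).image (· + 1)).card := hcard_img.symm
      _ ≤ s.card := Finset.card_le_card himg
      _ ≤ _ := h1
  · calc ((Finset.range N).filter p).card ≤ s.card := Finset.card_le_card h3
      _ ≤ (insert 0 (((Finset.range N).filter (fun j => p (j+1))).image (· + 1))).card :=
          Finset.card_le_card h2
      _ ≤ _ := by rw [← hcard_img]; exact Finset.card_insert_le _ _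

lemma cnt_preimage_le (N : ℕ) (U : Set (ℤ → Bool)) :
    cnt ω N (T ⁻¹' U) ≤ cnt ω N U + 1 ∧ cnt ω N U ≤ cnt ω N (T ⁻¹' U) + 1 := by
  classical
  have hmem : ∀ j : ℕ, (T^[j+1] ω ∈ T ⁻¹' U) ↔ T^[(j+1)+1] ω ∈ U := by
    intro j
    rw [Set.mem_preimage, ← Function.iterate_succ_apply' T (j+1) ω]
  have h := card_filter_shift (fun j => T^[j+1] ω ∈ U) N
  have e1 : cnt ω N (T ⁻¹' U)
      = ((Finset.range N).filter (fun j => (fun i => T^[i+1] ω ∈ U) (j+1))).card := by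
    simp only [cnt, Finset.card_filter]
    exact Finset.sum_congr rfl fun j _ => by simp only [hmem j]
  have e2 : cnt ω N U = ((Finset.range N).filter (fun j => T^[j+1] ω ∈ U)).card := by
    simp only [cnt, Finset.card_filter]
  rw [e1, e2]
  exact h

lemma cnt_eq_card (N : ℕ) (U : Set (ℤ → Bool)) (p : ℕ → Prop) [DecidablePred p]
    (h : ∀ j, (T^[j+1] ω ∈ U) ↔ p j) :
    cnt ω N U = ((Finset.range N).filter p).card := by
  classical
  simp only [cnt, Finset.card_filter]
  exact Finset.sum_congr rfl fun j _ => by simp only [h j]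

lemma cR_nonneg (N : ℕ) (U : Set (ℤ → Bool)) : 0 ≤ cR ω N U :=
  div_nonneg (by positivity) (by positivity)

lemma cR_le_one (N : ℕ) (U : Set (ℤ → Bool)) : cR ω N U ≤ 1 := by
  rcases Nat.eq_zero_or_pos N with rfl | hN
  · simp [cR]
  · rw [cR, div_le_one (by exact_mod_cast hN)]
    exact_mod_cast cnt_le ω N U

lemma cR_mono {U V : Set (ℤ → Bool)} (h : U ⊆ V) (N : ℕ) : cR ω N U ≤ cR ω N V := by
  simp only [cR, div_eq_mul_inv]
  exact mul_le_mul_of_nonneg_right (by exact_mod_cast cnt_mono ω h N) (by positivity)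

variable (F : Ultrafilter ℕ)

lemma exists_lim (U : Set (ℤ → Bool)) :
    ∃ x, x ∈ Icc (0:ℝ) 1 ∧ Tendsto (fun N => cR ω N U) ↑F (𝓝 x) := by
  have hle : ↑(F.map (fun N => cR ω N U)) ≤ 𝓟 (Icc (0:ℝ) 1) := by
    rw [Ultrafilter.coe_map, le_principal_iff, mem_map]
    exact univ_mem' (fun N => ⟨cR_nonneg ω N U, cR_le_one ω N U⟩)
  obtain ⟨x, hx, hlim⟩ := (isCompact_Icc (a := (0:ℝ)) (b := 1)).ultrafilter_le_nhds _ hle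
  exact ⟨x, hx, hlim⟩

noncomputable def Lr (U : Set (ℤ → Bool)) : ℝ := (exists_lim ω F U).choose

lemma Lr_mem_Icc (U : Set (ℤ → Bool)) : Lr ω F U ∈ Icc (0:ℝ) 1 :=
  (exists_lim ω F U).choose_spec.1

lemma tendsto_Lr (U : Set (ℤ → Bool)) :
    Tendsto (fun N => cR ω N U) ↑F (𝓝 (Lr ω F U)) :=
  (exists_lim ω F U).choose_spec.2

lemma Lr_nonneg (U : Set (ℤ → Bool)) : 0 ≤ Lr ω F U := (Lr_mem_Icc ω F U).1

lemma Lr_mono {U V : Set (ℤ → Bool)} (h : U ⊆ V) : Lr ω F U ≤ Lr ω F V :=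
  le_of_tendsto_of_tendsto' (tendsto_Lr ω F U) (tendsto_Lr ω F V) (fun N => cR_mono ω h N)

lemma Lr_union_le (U V : Set (ℤ → Bool)) : Lr ω F (U ∪ V) ≤ Lr ω F U + Lr ω F V := by
  refine le_of_tendsto_of_tendsto' (tendsto_Lr ω F (U ∪ V))
    ((tendsto_Lr ω F U).add (tendsto_Lr ω F V)) (fun N => ?_)
  simp only [cR, ← add_div, div_eq_mul_inv]
  refine le_trans (mul_le_mul_of_nonneg_right
    (show (cnt ω N (U ∪ V) : ℝ) ≤ (cnt ω N U : ℝ) + (cnt ω N V : ℝ) by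
      exact_mod_cast cnt_union_le ω N U V) (by positivity : (0:ℝ) ≤ (N:ℝ)⁻¹)) ?_
  rw [add_mul]

lemma Lr_union {U V : Set (ℤ → Bool)} (h : Disjoint U V) :
    Lr ω F (U ∪ V) = Lr ω F U + Lr ω F V := by
  refine tendsto_nhds_unique (tendsto_Lr ω F (U ∪ V)) ?_
  have : (fun N => cR ω N (U ∪ V)) = fun N => cR ω N U + cR ω N V := by
    funext N
    simp only [cR, ← add_div]
    congr 1
    exact_mod_cast cnt_union ω N h
  rw [this]
  exact (tendsto_Lr ω F U).add (tendsto_Lr ω F V)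

variable {F} in
lemma Lr_univ (hF : ↑F ≤ (atTop : Filter ℕ)) : Lr ω F univ = 1 := by
  refine tendsto_nhds_unique (tendsto_Lr ω F univ) ?_
  have : ∀ᶠ N in ↑F, cR ω N univ = 1 := by
    filter_upwards [hF (eventually_ge_atTop 1)] with N hN
    rw [cR, cnt_univ, div_self]
    exact_mod_cast Nat.one_le_iff_ne_zero.mp hN
  exact Tendsto.congr' (this.mono fun N h => h.symm) tendsto_const_nhds

variable {F} in
lemma Lr_preimage (hF : ↑F ≤ (atTop : Filter ℕ)) (U : Set (ℤ → Bool)) :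
    Lr ω F (T ⁻¹' U) = Lr ω F U := by
  have hinv : Tendsto (fun N : ℕ => 1 / (N : ℝ)) ↑F (𝓝 0) :=
    (tendsto_one_div_atTop_nhds_zero_nat).mono_left hF
  have key : ∀ (V W : Set (ℤ → Bool)), (∀ N, cnt ω N V ≤ cnt ω N W + 1) →
      Lr ω F V ≤ Lr ω F W := by
    intro V W hc
    have h2 : Tendsto (fun N => cR ω N W + 1 / (N : ℝ)) ↑F (𝓝 (Lr ω F W + 0)) :=
      (tendsto_Lr ω F W).add hinv
    rw [add_zero] at h2
    refine le_of_tendsto_of_tendsto' (tendsto_Lr ω F V) h2 (fun N => ?_)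
    rcases Nat.eq_zero_or_pos N with rfl | hN
    · simp [cR]
    · have hN' : (0:ℝ) < N := by exact_mod_cast hN
      rw [cR, cR, ← add_div, div_le_div_iff_of_pos_right hN']
      push_cast
      exact_mod_cast hc N
  refine le_antisymm (key _ _ fun N => (cnt_preimage_le ω N U).1)
    (key _ _ fun N => (cnt_preimage_le ω N U).2)

/-- Clopen separation of disjoint compact sets in a profinite-like space. -/
lemma clopen_sep {K₁ K₂ : Set (ℤ → Bool)} (h₁ : IsCompact K₁) (h₂ : IsCompact K₂)
    (hd : Disjoint K₁ K₂) : ∃ V : Set (ℤ → Bool), IsClopen V ∧ K₁ ⊆ V ∧ Disjoint V K₂ := by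
  classical
  have hopen : IsOpen K₂ᶜ := h₂.isClosed.isOpen_compl
  have hmem : ∀ x ∈ K₁, ∃ V : Set (ℤ → Bool), IsClopen V ∧ x ∈ V ∧ V ⊆ K₂ᶜ := by
    intro x hx
    exact compact_exists_isClopen_in_isOpen hopen (disjoint_left.mp hd hx)
  choose! V hV hxV hVsub using hmem
  obtain ⟨t, ht⟩ := h₁.elim_finite_subcover (fun x : K₁ => V x)
    (fun x => (hV x x.2).isOpen) (fun y hy => mem_iUnion.mpr ⟨⟨y, hy⟩, hxV y hy⟩)
  refine ⟨⋃ x ∈ t, V x, isClopen_biUnion_finset (fun x _ => hV x x.2), ?_, ?_⟩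
  · intro y hy
    obtain ⟨x, hxt, hyx⟩ := mem_iUnion₂.mp (ht hy)
    exact mem_iUnion₂.mpr ⟨x, hxt, hyx⟩
  · rw [disjoint_left]
    intro y hy hyK₂
    obtain ⟨x, _, hyx⟩ := mem_iUnion₂.mp hy
    exact hVsub x x.2 hyx hyK₂

noncomputable def lamR (K : Compacts (ℤ → Bool)) : ℝ :=
  ⨅ U : {U : Set (ℤ → Bool) // IsClopen U ∧ (K : Set (ℤ → Bool)) ⊆ U}, Lr ω F U

instance (K : Compacts (ℤ → Bool)) :
    Nonempty {U : Set (ℤ → Bool) // IsClopen U ∧ (K : Set (ℤ → Bool)) ⊆ U} :=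
  ⟨⟨univ, isClopen_univ, subset_univ _⟩⟩

lemma lamR_bddBelow (K : Compacts (ℤ → Bool)) :
    BddBelow (Set.range fun U : {U : Set (ℤ → Bool) // IsClopen U ∧ (K : Set (ℤ → Bool)) ⊆ U}
      => Lr ω F U) := by
  refine ⟨0, ?_⟩
  rintro x ⟨U, rfl⟩
  exact Lr_nonneg ω F U

lemma lamR_le {K : Compacts (ℤ → Bool)} {U : Set (ℤ → Bool)} (hU : IsClopen U)
    (hKU : (K : Set (ℤ → Bool)) ⊆ U) : lamR ω F K ≤ Lr ω F U :=
  ciInf_le (lamR_bddBelow ω F K) ⟨U, hU, hKU⟩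

lemma le_lamR {K : Compacts (ℤ → Bool)} {x : ℝ}
    (h : ∀ U : Set (ℤ → Bool), IsClopen U → (K : Set (ℤ → Bool)) ⊆ U → x ≤ Lr ω F U) :
    x ≤ lamR ω F K :=
  le_ciInf fun U => h U U.2.1 U.2.2

lemma lamR_nonneg (K : Compacts (ℤ → Bool)) : 0 ≤ lamR ω F K :=
  le_lamR ω F fun U _ _ => Lr_nonneg ω F U

lemma lamR_clopen {U : Set (ℤ → Bool)} (hU : IsClopen U) (hK : IsCompact U) :
    lamR ω F ⟨U, hK⟩ = Lr ω F U := by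
  refine le_antisymm (lamR_le ω F hU (subset_refl _)) (le_lamR ω F fun V _ hUV => ?_)
  exact Lr_mono ω F hUV

lemma lamR_mono {K₁ K₂ : Compacts (ℤ → Bool)} (h : (K₁ : Set (ℤ → Bool)) ⊆ K₂) :
    lamR ω F K₁ ≤ lamR ω F K₂ :=
  le_lamR ω F fun U hU hKU => lamR_le ω F hU (h.trans hKU)

lemma lamR_sup_le (K₁ K₂ : Compacts (ℤ → Bool)) :
    lamR ω F (K₁ ⊔ K₂) ≤ lamR ω F K₁ + lamR ω F K₂ := by
  refine le_of_forall_pos_le_add fun ε hε => ?_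
  obtain ⟨⟨U₁, hU₁, hK₁⟩, h1⟩ := exists_lt_of_ciInf_lt
    (show lamR ω F K₁ < lamR ω F K₁ + ε / 2 by linarith)
  obtain ⟨⟨U₂, hU₂, hK₂⟩, h2⟩ := exists_lt_of_ciInf_lt
    (show lamR ω F K₂ < lamR ω F K₂ + ε / 2 by linarith)
  have hsub : ((K₁ ⊔ K₂ : Compacts (ℤ → Bool)) : Set (ℤ → Bool)) ⊆ U₁ ∪ U₂ := by
    rw [Compacts.coe_sup]
    exact union_subset_union hK₁ hK₂
  have := (lamR_le ω F (hU₁.union hU₂) hsub).trans (Lr_union_le ω F U₁ U₂)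
  linarith

lemma lamR_sup_disjoint (K₁ K₂ : Compacts (ℤ → Bool))
    (hd : Disjoint (K₁ : Set (ℤ → Bool)) K₂) :
    lamR ω F (K₁ ⊔ K₂) = lamR ω F K₁ + lamR ω F K₂ := by
  refine le_antisymm (lamR_sup_le ω F K₁ K₂) (le_lamR ω F fun U hU hKU => ?_)
  rw [Compacts.coe_sup] at hKU
  obtain ⟨V, hV, hK₁V, hVK₂⟩ := clopen_sep K₁.isCompact K₂.isCompact hd
  have e1 : lamR ω F K₁ ≤ Lr ω F (U ∩ V) :=
    lamR_le ω F (hU.inter hV) (subset_inter ((subset_union_left).trans hKU) hK₁V)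
  have e2 : lamR ω F K₂ ≤ Lr ω F (U ∩ Vᶜ) :=
    lamR_le ω F (hU.inter hV.compl)
      (subset_inter ((subset_union_right).trans hKU)
        (subset_compl_iff_disjoint_left.mpr hVK₂))
  have hdisj : Disjoint (U ∩ V) (U ∩ Vᶜ) :=
    (disjoint_compl_right).mono inter_subset_right inter_subset_right
  have hunion : (U ∩ V) ∪ (U ∩ Vᶜ) = U := by
    rw [← Set.inter_union_distrib_left, Set.union_compl_self, Set.inter_univ]
  have := Lr_union ω F hdisj
  rw [hunion] at this
  linarith

noncomputable def szContent : Content (ℤ → Bool) where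
  toFun K := (lamR ω F K).toNNReal
  mono' K₁ K₂ h := Real.toNNReal_mono (lamR_mono ω F h)
  sup_le' K₁ K₂ := by
    rw [← Real.toNNReal_add (lamR_nonneg ω F K₁) (lamR_nonneg ω F K₂)]
    exact Real.toNNReal_mono (lamR_sup_le ω F K₁ K₂)
  sup_disjoint' K₁ K₂ hd _ _ := by
    show (lamR ω F (K₁ ⊔ K₂)).toNNReal = (lamR ω F K₁).toNNReal + (lamR ω F K₂).toNNReal
    rw [← Real.toNNReal_add (lamR_nonneg ω F K₁) (lamR_nonneg ω F K₂),
      lamR_sup_disjoint ω F K₁ K₂ hd]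

noncomputable def szMeasure : Measure (ℤ → Bool) := (szContent ω F).measure

lemma szMeasure_clopen {U : Set (ℤ → Bool)} (hU : IsClopen U) :
    szMeasure ω F U = ENNReal.ofReal (Lr ω F U) := by
  rw [szMeasure, Content.measure_apply _ hU.isOpen.measurableSet,
    (szContent ω F).outerMeasure_of_isOpen U hU.isOpen,
    (szContent ω F).innerContent_of_isCompact hU.isClosed.isCompact hU.isOpen]
  show ((szContent ω F).toFun ⟨U, hU.isClosed.isCompact⟩ : ℝ≥0∞) = _
  rw [show (szContent ω F).toFun ⟨U, hU.isClosed.isCompact⟩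
      = (lamR ω F ⟨U, hU.isClosed.isCompact⟩).toNNReal from rfl,
    lamR_clopen ω F hU hU.isClosed.isCompact]
  rfl

lemma borel_eq_clopen :
    (inferInstance : MeasurableSpace (ℤ → Bool))
      = MeasurableSpace.generateFrom {U : Set (ℤ → Bool) | IsClopen U} := by
  rw [BorelSpace.measurable_eq (α := ℤ → Bool)]
  exact isTopologicalBasis_isClopen.borel_eq_generateFrom

variable {F} in
lemma szMeasure_prob (hF : ↑F ≤ (atTop : Filter ℕ)) :
    IsProbabilityMeasure (szMeasure ω F) := by
  constructor
  rw [szMeasure_clopen ω F isClopen_univ, Lr_univ ω hF]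
  simp

variable {F} in
lemma szMeasure_invariant (hF : ↑F ≤ (atTop : Filter ℕ)) :
    (szMeasure ω F).map T = szMeasure ω F := by
  have hTm : Measurable T := T_continuous.measurable
  haveI := szMeasure_prob ω hF
  haveI : IsProbabilityMeasure ((szMeasure ω F).map T) :=
    Measure.isProbabilityMeasure_map hTm.aemeasurable
  refine ext_of_generate_finite _ (borel_eq_clopen) ?_ ?_ ?_
  · rintro U hU V hV -
    exact hU.inter hV
  · intro U hU
    rw [Measure.map_apply hTm hU.isOpen.measurableSet,
      szMeasure_clopen ω F (hU.preimage T_continuous), szMeasure_clopen ω F hU,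
      Lr_preimage ω hF U]
  · simp

end SzHelper

open MeasureTheory Filter

/-- Furstenberg multiple recurrence implies Szemerédi's theorem: if every
measure preserving system satisfies the multiple recurrence property, then
every set of integers of positive upper density contains arithmetic
progressions of every finite length. -/
theorem multiple_recurrence_implies_szemeredi
    (hMR : ∀ (X : Type) (_ : MeasurableSpace X) (μ : Measure X) (T : X → X),
      IsProbabilityMeasure μ → MeasurePreserving T μ μ → Function.Bijective T →
      ∀ A : Set X, MeasurableSet A → 0 < μ A → ∀ k : ℕ, 1 ≤ k →
        ∃ n : ℕ, 1 ≤ n ∧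
          0 < μ (⋂ i ∈ Finset.range (k + 1), (T^[i * n]) ⁻¹' A)) :
    ∀ E : Set ℤ, 0 < upperDensity E → ∀ k : ℕ,
      ∃ (m : ℤ) (n : ℤ), 1 ≤ n ∧ ∀ i : ℕ, i ≤ k → m + (i : ℤ) * n ∈ E := by

  classical
  intro E hE k
  open SzHelper in
  set u : ℕ → ℝ := fun N : ℕ =>
    (((Finset.Icc (1 : ℤ) (N : ℤ)).filter (· ∈ E)).card : ℝ) / (N : ℝ) with hu
  have hunn : ∀ N, 0 ≤ u N := fun N => by positivity
  have hcob : IsCoboundedUnder (· ≤ ·) atTop u :=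
    IsBoundedUnder.isCoboundedUnder_le
      ⟨0, Filter.eventually_map.mpr (Filter.Eventually.of_forall fun N => hunn N)⟩
  have hlimsup : upperDensity E = Filter.limsup u atTop := rfl
  have hfreq : ∃ᶠ N in atTop, upperDensity E / 2 < u N := by
    refine Filter.frequently_lt_of_lt_limsup hcob ?_
    rw [← hlimsup]; linarith
  set ω : ℤ → Bool := fun n => decide (n ∈ E) with hω
  set S : Set ℕ := {N | upperDensity E / 2 < u N} with hSdef
  haveI hne : (atTop ⊓ Filter.principal S).NeBot := Filter.frequently_iff_neBot.mp hfreq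
  set F : Ultrafilter ℕ := Ultrafilter.of (atTop ⊓ Filter.principal S) with hFdef
  have hF : ↑F ≤ (atTop : Filter ℕ) := (Ultrafilter.of_le _).trans inf_le_left
  have hS : S ∈ F := le_principal_iff.mp ((Ultrafilter.of_le _).trans inf_le_right)
  set A : Set (ℤ → Bool) := {f | f 0 = true} with hAdef
  have hA : IsClopen A := (isClopen_discrete {true}).preimage (continuous_apply 0)
  -- relate `cR` to the counting function `u`
  have hmemA : ∀ j : ℕ, (SzHelper.T^[j+1] ω ∈ A) ↔ ((j : ℤ) + 1) ∈ E := by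
    intro j
    show (SzHelper.T^[j+1] ω) 0 = true ↔ _
    rw [SzHelper.T_iterate]
    simp only [hω, zero_add, decide_eq_true_eq]
    norm_cast
  have hcnt_eq : ∀ N, SzHelper.cnt ω N A
      = ((Finset.range N).filter (fun j : ℕ => ((j : ℤ) + 1) ∈ E)).card :=
    fun N => SzHelper.cnt_eq_card ω N A _ hmemA
  have hcRA : ∀ N : ℕ, SzHelper.cR ω N A = u N := by
    intro N
    rw [SzHelper.cR, hcnt_eq N]
    show _ = (((Finset.Icc (1 : ℤ) (N : ℤ)).filter (· ∈ E)).card : ℝ) / (N : ℝ)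
    congr 1
    norm_cast
    refine Finset.card_bij' (fun j _ => (j : ℤ) + 1) (fun m _ => (m - 1).toNat) ?_ ?_ ?_ ?_
    · intro j hj
      obtain ⟨hjN, hjE⟩ := Finset.mem_filter.mp hj
      rw [Finset.mem_range] at hjN
      refine Finset.mem_filter.mpr ⟨?_, hjE⟩
      simp only [Finset.mem_Icc]
      omega
    · intro m hm
      obtain ⟨hmI, hmE⟩ := Finset.mem_filter.mp hm
      simp only [Finset.mem_Icc] at hmI
      refine Finset.mem_filter.mpr ⟨?_, ?_⟩
      · rw [Finset.mem_range]; omega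
      · have he : ((m - 1).toNat : ℤ) + 1 = m := by omega
        show ((m - 1).toNat : ℤ) + 1 ∈ E
        rwa [he]
    · intro j _; omega
    · intro m hm
      obtain ⟨hmI, -⟩ := Finset.mem_filter.mp hm
      simp only [Finset.mem_Icc] at hmI
      omega
  have hLA : upperDensity E / 2 ≤ SzHelper.Lr ω F A := by
    refine ge_of_tendsto (SzHelper.tendsto_Lr ω F A) ?_
    filter_upwards [hS] with N hN
    rw [hcRA]
    exact le_of_lt hN
  haveI hprob := SzHelper.szMeasure_prob ω hF
  have hTpres : MeasurePreserving SzHelper.T (SzHelper.szMeasure ω F) (SzHelper.szMeasure ω F) :=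
    ⟨SzHelper.T_continuous.measurable, SzHelper.szMeasure_invariant ω hF⟩
  have hApos : 0 < SzHelper.szMeasure ω F A := by
    rw [SzHelper.szMeasure_clopen ω F hA]
    exact ENNReal.ofReal_pos.mpr (by linarith)
  obtain ⟨n, hn1, hpos⟩ := hMR (ℤ → Bool) inferInstance (SzHelper.szMeasure ω F) SzHelper.T
    hprob hTpres SzHelper.T_bijective A hA.isOpen.measurableSet hApos (k + 1)
    (Nat.le_add_left 1 k)
  set B : Set (ℤ → Bool) := ⋂ i ∈ Finset.range (k + 1 + 1), (SzHelper.T^[i * n]) ⁻¹' A with hB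
  have hBclopen : IsClopen B :=
    isClopen_biInter_finset fun i _ => hA.preimage (SzHelper.T_continuous.iterate _)
  rw [SzHelper.szMeasure_clopen ω F hBclopen] at hpos
  have hLrB : 0 < SzHelper.Lr ω F B := ENNReal.ofReal_pos.mp hpos
  have hev : ∀ᶠ N in ↑F, 0 < SzHelper.cR ω N B :=
    (SzHelper.tendsto_Lr ω F B).eventually (eventually_gt_nhds hLrB)
  obtain ⟨N, hN⟩ := hev.exists
  have hcntpos : 0 < SzHelper.cnt ω N B := by
    by_contra h
    push_neg at h
    have h0 : SzHelper.cnt ω N B = 0 := Nat.le_zero.mp h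
    rw [SzHelper.cR, h0] at hN
    simp at hN
  rw [SzHelper.cnt] at hcntpos
  obtain ⟨j, hj⟩ := Finset.card_pos.mp hcntpos
  have hjB : SzHelper.T^[j+1] ω ∈ B := (Finset.mem_filter.mp hj).2
  refine ⟨(j : ℤ) + 1, (n : ℤ), by exact_mod_cast hn1, fun i hik => ?_⟩
  have hiB : SzHelper.T^[j+1] ω ∈ (SzHelper.T^[i * n]) ⁻¹' A := by
    simp only [hB, Set.mem_iInter] at hjB
    exact hjB i (Finset.mem_range.mpr (by omega))
  have hval : (SzHelper.T^[i*n] (SzHelper.T^[j+1] ω)) 0 = true := hiB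
  rw [← Function.iterate_add_apply, SzHelper.T_iterate] at hval
  have hmem : ((i * n + (j + 1) : ℕ) : ℤ) ∈ E := by
    simpa only [hω, zero_add, decide_eq_true_eq] using hval
  have : ((j : ℤ) + 1) + (i : ℤ) * (n : ℤ) = ((i * n + (j + 1) : ℕ) : ℤ) := by
    push_cast; ring
  rw [this]
  exact hmem
end

section
/- Let δ > 0, k ∈ ℕ, and suppose Szemerédi's theorem holds with threshold N(δ,k). Let (X, 𝒳, μ) be a probability space and A₁, …, A_N ∈ 𝒳 with μ(Aᵢ) ≥ δ for all i. If N > N(δ,k), then there exist a, d ∈ ℕ with d ≥ 1 such that A_a ∩ A_{a+d} ∩ A_{a+2d} ∩ ⋯ ∩ A_{a+kd} ≠ ∅. -/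
/-!
Count, at each point `x`, the indices `i ≤ N` with `x ∈ A i`. Its integral is `∑ μ (A i) ≥ δ N`,
so by the first moment method some `x` lies in at least `δ N` of the sets. Szemerédi's theorem
applied to this set of indices gives a progression `a, a + d, …, a + k d` all of whose sets
contain `x`.
-/

open MeasureTheory
open scoped ENNReal Finset

namespace MeasureTheory

variable {X ι : Type*} [MeasurableSpace X]

open Classical in
theorem lintegral_card_filter_mem (μ : Measure X) (s : Finset ι) {A : ι → Set X}
    (hA : ∀ i ∈ s, MeasurableSet (A i)) :
    ∫⁻ x, (#{i ∈ s | x ∈ A i} : ℝ≥0∞) ∂μ = ∑ i ∈ s, μ (A i) := by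
  have hcard (x : X) : (#{i ∈ s | x ∈ A i} : ℝ≥0∞) = ∑ i ∈ s, (A i).indicator 1 x := by
    simp only [Finset.natCast_card_filter, Set.indicator_apply, Pi.one_apply]
  simp_rw [hcard]
  rw [lintegral_finsetSum _ fun i hi => measurable_one.indicator (hA i hi)]
  exact Finset.sum_congr rfl fun i hi => lintegral_indicator_one (hA i hi)

open Classical in
theorem exists_sum_measure_le_card_filter_mem (μ : Measure X) [IsProbabilityMeasure μ]
    (s : Finset ι) {A : ι → Set X} (hA : ∀ i ∈ s, MeasurableSet (A i)) :
    ∃ x, ∑ i ∈ s, μ (A i) ≤ #{i ∈ s | x ∈ A i} := by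
  have hint := lintegral_card_filter_mem μ s hA
  have hfin : ∑ i ∈ s, μ (A i) ≠ ∞ := ENNReal.sum_ne_top.2 fun i _ => measure_ne_top μ (A i)
  obtain ⟨x, hx⟩ := exists_lintegral_le (μ := μ) (hint ▸ hfin)
  exact ⟨x, hint ▸ hx⟩

end MeasureTheory

theorem progression_of_sets_in_probability_space_general
    (δ : ℝ) (k : ℕ) (N₀ : ℕ)
    (hSz : ∀ N : ℕ, N₀ < N → ∀ E : Finset ℕ, E ⊆ Finset.Icc 1 N →
      δ * N ≤ E.card →
      ∃ a d : ℕ, 1 ≤ d ∧ ∀ i : ℕ, i ≤ k → a + i * d ∈ E)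
    {X : Type*} [MeasurableSpace X] (μ : Measure X) [IsProbabilityMeasure μ]
    (N : ℕ) (hN : N₀ < N)
    (A : ℕ → Set X) (hAmeas : ∀ i, MeasurableSet (A i))
    (hAδ : ∀ i ∈ Finset.Icc 1 N, ENNReal.ofReal δ ≤ μ (A i)) :
    ∃ a d : ℕ, 1 ≤ d ∧
      (⋂ i ∈ Finset.range (k + 1), A (a + i * d)).Nonempty := by
  classical
  obtain ⟨x, hx⟩ := exists_sum_measure_le_card_filter_mem μ (Finset.Icc 1 N) fun i _ => hAmeas i
  have hsum : ENNReal.ofReal (δ * N) ≤ ∑ i ∈ Finset.Icc 1 N, μ (A i) := by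
    calc ENNReal.ofReal (δ * N) = N * ENNReal.ofReal δ := by
          rw [mul_comm, ENNReal.ofReal_mul (Nat.cast_nonneg N), ENNReal.ofReal_natCast]
      _ = ∑ _i ∈ Finset.Icc 1 N, ENNReal.ofReal δ := by simp
      _ ≤ ∑ i ∈ Finset.Icc 1 N, μ (A i) := Finset.sum_le_sum hAδ
  have hE : δ * N ≤ #{i ∈ Finset.Icc 1 N | x ∈ A i} :=
    ENNReal.ofReal_le_natCast.1 (hsum.trans hx)
  obtain ⟨a, d, hd, hmem⟩ := hSz N hN _ (Finset.filter_subset _ _) hE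
  refine ⟨a, d, hd, x, Set.mem_iInter₂.2 fun i hi => ?_⟩
  exact (Finset.mem_filter.1 (hmem i (Nat.lt_succ_iff.1 (Finset.mem_range.1 hi)))).2

/-- From Szemerédi's theorem (finite form, with threshold `N₀ = N(δ,k)`):
given sets `A₁, …, A_N` of measure at least `δ` in a probability space, with
`N > N₀`, some subfamily indexed by an arithmetic progression of length `k+1`
has nonempty intersection. -/
theorem progression_of_sets_in_probability_space
    (δ : ℝ) (hδ : 0 < δ) (k : ℕ) (N₀ : ℕ)
    (hSz : ∀ N : ℕ, N₀ < N → ∀ E : Finset ℕ, E ⊆ Finset.Icc 1 N →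
      δ * N ≤ E.card →
      ∃ a d : ℕ, 1 ≤ d ∧ ∀ i : ℕ, i ≤ k → a + i * d ∈ E)
    {X : Type*} [MeasurableSpace X] (μ : Measure X) [IsProbabilityMeasure μ]
    (N : ℕ) (hN : N₀ < N)
    (A : ℕ → Set X) (hAmeas : ∀ i, MeasurableSet (A i))
    (hAδ : ∀ i ∈ Finset.Icc 1 N, ENNReal.ofReal δ ≤ μ (A i)) :
    ∃ a d : ℕ, 1 ≤ d ∧
      (⋂ i ∈ Finset.range (k + 1), A (a + i * d)).Nonempty :=
  progression_of_sets_in_probability_space_general δ k N₀ hSz μ N hN A hAmeas hAδ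
end

section
/- Let (X, 𝒳, μ, T) be an ergodic measure preserving system where X = Z is a compact abelian group, T is an ergodic rotation x ↦ x+α, and let f ∈ L^∞(m) be nonnegative with ∫ f dm > 0. Then ∬_{Z×Z} f(s) f(s+t) f(s+2t) dm(s) dm(t) > 0. -/
/-!
Translation acts continuously on `L¹`, so for bounded `f` the correlation
`g t = ∫ f(s) f(s+t) f(s+2t) dm(s)` is continuous in `t`: changing `t` changes the integrand by
at most `C²(|f(s+t) - f(s+t')| + |f(s+2t) - f(s+2t')|)`. Since `g ≥ 0` and
`g 0 = ∫ f³ > 0`, `g` is positive on a neighbourhood of `0`, which has positive Haar measure.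
-/

open MeasureTheory Filter Topology

theorem abs_mul_mul_sub_mul_mul_le {a b c b' c' C : ℝ} (ha : |a| ≤ C) (hb' : |b'| ≤ C)
    (hc : |c| ≤ C) : |a * b * c - a * b' * c'| ≤ C * C * |b - b'| + C * C * |c - c'| := by
  have hC : 0 ≤ C := (abs_nonneg a).trans ha
  calc |a * b * c - a * b' * c'| = |a * (b - b') * c + a * b' * (c - c')| := by ring_nf
    _ ≤ |a| * |b - b'| * |c| + |a| * |b'| * |c - c'| :=
        (abs_add_le _ _).trans_eq (by simp only [abs_mul])
    _ ≤ C * |b - b'| * C + C * C * |c - c'| := by gcongr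
    _ = C * C * |b - b'| + C * C * |c - c'| := by ring

theorem integral_pow_pos_of_integral_pos {α : Type*} [MeasurableSpace α] {μ : Measure α}
    {f : α → ℝ} (hf₀ : 0 ≤ f) (hf : Integrable f μ) {n : ℕ}
    (hfn : Integrable (fun x => f x ^ n) μ) (hpos : 0 < ∫ x, f x ∂μ) :
    0 < ∫ x, f x ^ n ∂μ := by
  rw [integral_pos_iff_support_of_nonneg hf₀ hf] at hpos
  rw [integral_pos_iff_support_of_nonneg (fun x => pow_nonneg (hf₀ x) n) hfn]
  exact hpos.trans_le (measure_mono fun x hx => pow_ne_zero n hx)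

section RightInvariant

variable {G : Type*} [AddGroup G] [TopologicalSpace G] [IsTopologicalAddGroup G]
  [MeasurableSpace G] [BorelSpace G] {μ : Measure G} [μ.IsAddRightInvariant]
  [μ.InnerRegularCompactLTTop]

theorem tendsto_integral_abs_sub_comp_add_right [IsLocallyFiniteMeasure μ] {f : G → ℝ}
    (hf : Integrable f μ) (u : G) :
    Tendsto (fun t => ∫ s, |f (s + t) - f (s + u)| ∂μ) (𝓝 u) (𝓝 0) := by
  let translate : G → C(G, G) := fun t => ⟨(· + t), continuous_add_const t⟩
  have htranslate : Continuous translate :=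
    ContinuousMap.continuous_of_continuous_uncurry _ (continuous_snd.add continuous_fst)
  have hpres (t : G) : MeasurePreserving (translate t) μ μ := measurePreserving_add_right μ t
  let Φ : G → Lp ℝ 1 μ := fun t => Lp.compMeasurePreserving (translate t) (hpres t) (hf.toL1 f)
  have hΦ : Continuous Φ :=
    continuous_const.compMeasurePreservingLp htranslate hpres ENNReal.one_ne_top
  have hΦ_ae (t : G) : (Φ t : G → ℝ) =ᵐ[μ] fun s => f (s + t) :=
    (Lp.coeFn_compMeasurePreserving _ (hpres t)).trans
      ((hpres t).quasiMeasurePreserving.ae_eq (Integrable.coeFn_toL1 hf))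
  have hdist (t : G) : ∫ s, |f (s + t) - f (s + u)| ∂μ = dist (Φ t) (Φ u) := by
    rw [dist_eq_norm, L1.norm_eq_integral_norm]
    refine integral_congr_ae ?_
    filter_upwards [Lp.coeFn_sub (Φ t) (Φ u), hΦ_ae t, hΦ_ae u] with s hsub ht hu
    rw [Real.norm_eq_abs, hsub, Pi.sub_apply, ht, hu]
  simp_rw [hdist]
  exact tendsto_iff_dist_tendsto_zero.mp (hΦ.tendsto u)

theorem continuous_integral_mul_comp_add_mul_comp_add [IsFiniteMeasure μ]
    {T : Type*} [TopologicalSpace T]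
    {f₀ f₁ f₂ : G → ℝ} {C : ℝ} (hf₀ : Measurable f₀) (hf₁ : Measurable f₁) (hf₂ : Measurable f₂)
    (hf₀C : ∀ x, |f₀ x| ≤ C) (hf₁C : ∀ x, |f₁ x| ≤ C) (hf₂C : ∀ x, |f₂ x| ≤ C)
    {φ ψ : T → G} (hφ : Continuous φ) (hψ : Continuous ψ) :
    Continuous fun t => ∫ s, f₀ s * f₁ (s + φ t) * f₂ (s + ψ t) ∂μ := by
  have hC : 0 ≤ C := (abs_nonneg _).trans (hf₀C 0)
  have hint_of_bdd {g : G → ℝ} {D : ℝ} (hg : Measurable g) (hgD : ∀ x, |g x| ≤ D) :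
      Integrable g μ :=
    .of_bound hg.aestronglyMeasurable D (.of_forall hgD)
  have hf₁i := hint_of_bdd hf₁ hf₁C
  have hf₂i := hint_of_bdd hf₂ hf₂C
  have hint (a b : G) : Integrable (fun s => f₀ s * f₁ (s + a) * f₂ (s + b)) μ :=
    hint_of_bdd ((hf₀.mul (hf₁.comp (measurable_add_const a))).mul
      (hf₂.comp (measurable_add_const b))) (D := C * C * C) fun s => by
        simp only [abs_mul]
        gcongr
        exacts [hf₀C _, hf₁C _, hf₂C _]
  have hdiff_int {g : G → ℝ} (hg : Measurable g) (hgC : ∀ x, |g x| ≤ C) (a b : G) :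
      Integrable (fun s => C * C * |g (s + a) - g (s + b)|) μ :=
    (hint_of_bdd ((hg.comp (measurable_add_const a)).sub
      (hg.comp (measurable_add_const b))).abs (D := C + C) fun s => by
        rw [abs_abs]
        exact (abs_sub _ _).trans (add_le_add (hgC _) (hgC _))).const_mul _
  rw [continuous_iff_continuousAt]
  intro u
  have hbound (t : T) :
      dist (∫ s, f₀ s * f₁ (s + φ t) * f₂ (s + ψ t) ∂μ)
          (∫ s, f₀ s * f₁ (s + φ u) * f₂ (s + ψ u) ∂μ)
        ≤ C * C * ∫ s, |f₁ (s + φ t) - f₁ (s + φ u)| ∂μ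
          + C * C * ∫ s, |f₂ (s + ψ t) - f₂ (s + ψ u)| ∂μ := by
    rw [Real.dist_eq, ← integral_sub (hint _ _) (hint _ _), ← integral_const_mul,
      ← integral_const_mul, ← integral_add (hdiff_int hf₁ hf₁C _ _) (hdiff_int hf₂ hf₂C _ _)]
    exact abs_integral_le_integral_abs.trans (integral_mono ((hint _ _).sub (hint _ _)).abs
      ((hdiff_int hf₁ hf₁C _ _).add (hdiff_int hf₂ hf₂C _ _))
      fun s => abs_mul_mul_sub_mul_mul_le (hf₀C _) (hf₁C _) (hf₂C _))
  have hlim := (((tendsto_integral_abs_sub_comp_add_right hf₁i (φ u)).comp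
    (hφ.tendsto u)).const_mul (C * C)).add
    (((tendsto_integral_abs_sub_comp_add_right hf₂i (ψ u)).comp
      (hψ.tendsto u)).const_mul (C * C))
  simp only [mul_zero, add_zero] at hlim
  exact tendsto_iff_dist_tendsto_zero.mpr (squeeze_zero (fun _ => dist_nonneg) hbound hlim)

end RightInvariant

theorem triple_correlation_positive_general
    {Z : Type*} [AddCommGroup Z] [TopologicalSpace Z] [IsTopologicalAddGroup Z]
    [CompactSpace Z] [MeasurableSpace Z] [BorelSpace Z]
    (m : Measure Z) [m.IsAddHaarMeasure]
    (f : Z → ℝ) (hf : Measurable f) (hfbdd : ∃ C : ℝ, ∀ x, |f x| ≤ C)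
    (hfnonneg : ∀ x, 0 ≤ f x) (hfint : 0 < ∫ x, f x ∂m) :
    0 < ∫ t, ∫ s, f s * f (s + t) * f (s + 2 • t) ∂m ∂m := by
  obtain ⟨C, hC⟩ := hfbdd
  have hcont : Continuous fun t => ∫ s, f s * f (s + t) * f (s + 2 • t) ∂m :=
    continuous_integral_mul_comp_add_mul_comp_add hf hf hf hC hC hC continuous_id
      (continuous_const_smul 2)
  have hcube : 0 < ∫ s, f s ^ 3 ∂m :=
    integral_pow_pos_of_integral_pos hfnonneg (.of_bound hf.aestronglyMeasurable C (.of_forall hC))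
      (.of_bound (hf.pow_const 3).aestronglyMeasurable (C ^ 3) (.of_forall fun x => by
        simpa [abs_pow] using pow_le_pow_left₀ (abs_nonneg _) (hC x) 3)) hfint
  refine hcont.integral_pos_of_hasCompactSupport_nonneg_nonzero (.of_compactSpace _)
    (fun t => integral_nonneg fun s => ?_) (x := 0) ?_
  · exact mul_nonneg (mul_nonneg (hfnonneg _) (hfnonneg _)) (hfnonneg _)
  · simpa [pow_three, mul_assoc] using hcube.ne'

/-- On a compact abelian group `Z` with Haar probability measure `m`, carrying
an ergodic rotation `x ↦ x + α`, if `f` is a bounded measurable nonnegative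
function with positive integral then
`∬ f(s) f(s+t) f(s+2t) dm(s) dm(t) > 0`. -/
theorem triple_correlation_positive
    {Z : Type*} [AddCommGroup Z] [TopologicalSpace Z] [IsTopologicalAddGroup Z]
    [CompactSpace Z] [MeasurableSpace Z] [BorelSpace Z]
    (m : Measure Z) [m.IsAddHaarMeasure] [IsProbabilityMeasure m]
    (α : Z) (hrot : Ergodic (fun x => x + α) m)
    (f : Z → ℝ) (hf : Measurable f) (hfbdd : ∃ C : ℝ, ∀ x, |f x| ≤ C)
    (hfnonneg : ∀ x, 0 ≤ f x) (hfint : 0 < ∫ x, f x ∂m) :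
    0 < ∫ t, ∫ s, f s * f (s + t) * f (s + 2 • t) ∂m ∂m :=
  triple_correlation_positive_general m f hf hfbdd hfnonneg hfint
end

section
/- Let (X, 𝒳, μ, T) be a measure preserving system, let λ ∈ ℂ with |λ| = 1, let f ∈ L^∞(μ) with f(Tx) = λf(x) a.e., and let F ∈ L^∞(μ) satisfy F(Tx) = f(x)F(x) a.e. Then for every n ∈ ℕ, F(Tⁿx) = λ^{n(n-1)/2} f(x)ⁿ F(x) a.e., and consequently F(x) = F(Tⁿx)³ · F(T²ⁿx)⁻³ · F(T³ⁿx) a.e. (assuming |F| = 1 a.e.). -/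
open MeasureTheory

/-! Iterating `F ∘ T = f F` and `f ∘ T = λ f` gives `F ∘ Tⁿ = λ^(n choose 2) fⁿ F`. Along
`0, n, 2n, 3n` the exponents of `λ` and `f` are polynomials of degree at most two, so their third
differences vanish, which is the identity `F = (F ∘ Tⁿ)³ (F ∘ T²ⁿ)⁻³ (F ∘ T³ⁿ)`. -/

theorem choose_two_two_mul_mul_three (n : ℕ) :
    (2 * n).choose 2 * 3 = n.choose 2 * 3 + (3 * n).choose 2 := by
  have h : ((2 * n).choose 2 * 3 : ℚ) = n.choose 2 * 3 + (3 * n).choose 2 := by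
    simp only [Nat.cast_choose_two]; push_cast; ring
  exact_mod_cast h

theorem eq_cube_mul_inv_cube_mul_of_pow_choose_two {G : Type*} [CommGroupWithZero G]
    (l u v : G) (n : ℕ) (h : l ^ (2 * n).choose 2 * u ^ (2 * n) * v ≠ 0) :
    v = (l ^ n.choose 2 * u ^ n * v) ^ 3 * ((l ^ (2 * n).choose 2 * u ^ (2 * n) * v)⁻¹) ^ 3
      * (l ^ (3 * n).choose 2 * u ^ (3 * n) * v) := by
  rw [inv_pow, mul_right_comm, ← div_eq_mul_inv, eq_div_iff (pow_ne_zero 3 h)]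
  simp only [mul_pow, ← pow_mul]
  rw [choose_two_two_mul_mul_three, show 2 * n * 3 = n * 3 + 3 * n by ring, pow_add, pow_add]
  ac_rfl

theorem ae_apply_iterate_eq_pow_choose_two_mul {X M : Type*} [MeasurableSpace X] [CommMonoid M]
    {μ : Measure X} {T : X → X} (hT : Measure.QuasiMeasurePreserving T μ μ) {l : M} {f F : X → M}
    (hf : ∀ᵐ x ∂μ, f (T x) = l * f x) (hF : ∀ᵐ x ∂μ, F (T x) = f x * F x) (n : ℕ) :
    ∀ᵐ x ∂μ, F (T^[n] x) = l ^ n.choose 2 * f x ^ n * F x := by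
  induction n with
  | zero => simp
  | succ n ih =>
    filter_upwards [hT.ae ih, hf, hF] with x hn hfx hFx
    rw [Function.iterate_succ_apply, hn, hfx, hFx, Nat.choose_succ_succ', Nat.choose_one_right,
      mul_pow, pow_add, pow_succ]
    ac_rfl

theorem generalized_eigenfunction_iterate_general
    {X : Type*} [MeasurableSpace X] (μ : Measure X)
    (T : X → X) (hT : MeasurePreserving T μ μ)
    (l : ℂ)
    (f F : X → ℂ)
    (hFmod : ∀ᵐ x ∂μ, ‖F x‖ = 1)
    (hf : ∀ᵐ x ∂μ, f (T x) = l * f x)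
    (hF : ∀ᵐ x ∂μ, F (T x) = f x * F x) :
    ∀ n : ℕ,
      (∀ᵐ x ∂μ, F (T^[n] x) = l ^ (n * (n - 1) / 2) * (f x) ^ n * F x) ∧
      (∀ᵐ x ∂μ, F x =
        (F (T^[n] x)) ^ 3 * ((F (T^[2 * n] x))⁻¹) ^ 3 * F (T^[3 * n] x)) := by
  have hiter := ae_apply_iterate_eq_pow_choose_two_mul hT.quasiMeasurePreserving hf hF
  intro n
  refine ⟨by simpa only [Nat.choose_two_right] using hiter n, ?_⟩
  have hne : ∀ᵐ x ∂μ, F (T^[2 * n] x) ≠ 0 :=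
    (hT.iterate (2 * n)).quasiMeasurePreserving.ae hFmod |>.mono fun x hx ↦
      norm_ne_zero_iff.mp (hx.symm ▸ one_ne_zero)
  filter_upwards [hiter n, hiter (2 * n), hiter (3 * n), hne] with x ha hb hc hb0
  rw [hb] at hb0
  rw [ha, hb, hc]
  exact eq_cube_mul_inv_cube_mul_of_pow_choose_two _ _ _ n hb0

/-- If `f` is an eigenfunction of modulus one with eigenvalue `λ` and `F`
satisfies `F∘T = f·F` with `|F| = 1` a.e., then
`F(Tⁿx) = λ^{n(n-1)/2} f(x)ⁿ F(x)` a.e., and consequently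
`F(x) = F(Tⁿx)³ F(T²ⁿx)⁻³ F(T³ⁿx)` a.e. -/
theorem generalized_eigenfunction_iterate
    {X : Type*} [MeasurableSpace X] (μ : Measure X) [IsProbabilityMeasure μ]
    (T : X → X) (hT : MeasurePreserving T μ μ)
    (l : ℂ) (hl : ‖l‖ = 1)
    (f F : X → ℂ) (hfm : Measurable f) (hFm : Measurable F)
    (hfmod : ∀ᵐ x ∂μ, ‖f x‖ = 1)
    (hFmod : ∀ᵐ x ∂μ, ‖F x‖ = 1)
    (hf : ∀ᵐ x ∂μ, f (T x) = l * f x)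
    (hF : ∀ᵐ x ∂μ, F (T x) = f x * F x) :
    ∀ n : ℕ,
      (∀ᵐ x ∂μ, F (T^[n] x) = l ^ (n * (n - 1) / 2) * (f x) ^ n * F x) ∧
      (∀ᵐ x ∂μ, F x =
        (F (T^[n] x)) ^ 3 * ((F (T^[2 * n] x))⁻¹) ^ 3 * F (T^[3 * n] x)) :=
  generalized_eigenfunction_iterate_general μ T hT l f F hFmod hf hF
end

section
/- Let X = 𝕋 × 𝕋 with Haar measure μ and T(x,y) = (x, y+x). Let E ⊆ {0,1,…,L−1} be a set containing no nontrivial 3-term arithmetic progression, and B = ⋃_{j∈E} [j/(2L), j/(2L)+1/(4L)) ⊆ 𝕋, A = 𝕋 × B. Then for every nonzero integer n, μ(A ∩ TⁿA ∩ T²ⁿA) ≤ m(B)/(4L). -/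
open MeasureTheory
open Set


lemma aux_measurableSet_image_Ico (c d : ℝ) :
    MeasurableSet (((↑) : ℝ → AddCircle (1:ℝ)) '' Set.Ico c d) := by
  rcases le_or_gt d c with h | h
  · rw [Set.Ico_eq_empty (not_lt.mpr h)]; simp
  · rw [← Set.Ioo_insert_left h, Set.image_insert_eq]
    exact ((QuotientAddGroup.isOpenMap_coe _ isOpen_Ioo).measurableSet).insert _

lemma aux_volume_image_Ico_le (c d : ℝ) (h1 : d ≤ c + 1) :
    volume (((↑) : ℝ → AddCircle (1:ℝ)) '' Set.Ico c d) ≤ ENNReal.ofReal (d - c) := by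
  rcases le_or_gt d c with h | h
  · rw [Set.Ico_eq_empty (not_lt.mpr h)]; simp
  have hmeas := aux_measurableSet_image_Ico c d
  have hmp := AddCircle.measurePreserving_mk 1 c
  rw [← hmp.measure_preimage hmeas.nullMeasurableSet,
      Measure.restrict_apply (hmeas.preimage AddCircle.measurable_mk')]
  refine le_trans (measure_mono (?_ : _ ⊆ Set.Ioc c d ∪ {c + 1}))
    (le_trans (measure_union_le _ _) ?_)
  · rintro x ⟨⟨w, hw, hwx⟩, hx⟩
    have h0 : ((x - w : ℝ) : AddCircle (1:ℝ)) = 0 := by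
      rw [QuotientAddGroup.mk_sub, hwx, sub_self]
    obtain ⟨N, hN⟩ := (AddCircle.coe_eq_zero_iff 1).mp h0
    have hNr : (N : ℝ) = x - w := by simpa using hN
    have hN1 : (-1 : ℝ) < N := by rw [hNr]; obtain ⟨hw1, hw2⟩ := hw; obtain ⟨hx1, hx2⟩ := hx; linarith
    have hN2 : (N : ℝ) ≤ 1 := by rw [hNr]; obtain ⟨hw1, hw2⟩ := hw; obtain ⟨hx1, hx2⟩ := hx; linarith
    have hN1' : (-1 : ℤ) < N := by exact_mod_cast hN1
    have hN2' : N ≤ (1 : ℤ) := by exact_mod_cast hN2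
    interval_cases N
    · left
      have hxw : x = w := by push_cast at hNr; linarith
      exact ⟨hx.1, by rw [hxw]; exact hw.2.le⟩
    · right
      have hxw : x = w + 1 := by push_cast at hNr; linarith
      have hxc : x = c + 1 := le_antisymm hx.2 (by rw [hxw]; linarith [hw.1])
      simp [hxc]
  · simp [Real.volume_Ioc]


lemma aux_clear (L : ℝ) (hL : 0 < L) (m v : ℝ) (hv : v < m / (2*L) + 1/(4*L)) :
    2*L*v < m + 1/2 := by
  have h2L : (0:ℝ) < 2*L := by linarith
  have h := mul_lt_mul_of_pos_left hv h2L
  have he : (2*L)*(m/(2*L) + 1/(4*L)) = m + 1/2 := by field_simp; try ring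
  linarith

lemma aux_slice (L : ℕ) (hL : 0 < L) (E : Finset ℕ) (hEL : E ⊆ Finset.range L)
    (hE : ∀ a ∈ E, ∀ b ∈ E, ∀ c ∈ E, a + c = 2 * b → a = b)
    (y : AddCircle (1 : ℝ)) (j : ℕ) (hj : j ∈ E) (r : ℝ)
    (hr : r ∈ Set.Ico ((j : ℝ) / (2 * L)) ((j : ℝ) / (2 * L) + 1 / (4 * L)))
    (hyr : (r : AddCircle (1:ℝ)) = y) :
    {t : AddCircle (1:ℝ) |
        (y + t ∈ ⋃ j ∈ E, ((↑·) : ℝ → AddCircle (1 : ℝ)) ''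
          Set.Ico ((j : ℝ) / (2 * L)) ((j : ℝ) / (2 * L) + 1 / (4 * L))) ∧
        (y + t + t ∈ ⋃ j ∈ E, ((↑·) : ℝ → AddCircle (1 : ℝ)) ''
          Set.Ico ((j : ℝ) / (2 * L)) ((j : ℝ) / (2 * L) + 1 / (4 * L)))} ⊆
      ((↑) : ℝ → AddCircle (1:ℝ)) ''
        Set.Ico (((j:ℝ)/(2*L) - r)/2) (((j:ℝ)/(2*L) - r)/2 + 1/(8*L)) := by
  rintro t ⟨ht1, ht2⟩
  simp only [Set.mem_iUnion, Set.mem_image, exists_prop] at ht1 ht2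
  obtain ⟨k, hk, s, hs, hts⟩ := ht1
  obtain ⟨l, hl, u, hu, htu⟩ := ht2
  have hLR : (0:ℝ) < L := by exact_mod_cast hL
  have htval : t = ((s - r : ℝ) : AddCircle (1:ℝ)) := by
    rw [QuotientAddGroup.mk_sub, hts, hyr]; abel
  have h0 : ((2*s - r - u : ℝ) : AddCircle (1:ℝ)) = 0 := by
    rw [show (2*s - r - u : ℝ) = s + s - r - u by ring,
      QuotientAddGroup.mk_sub, QuotientAddGroup.mk_sub, QuotientAddGroup.mk_add, hts, htu, hyr]
    abel
  obtain ⟨N, hN⟩ := (AddCircle.coe_eq_zero_iff 1).mp h0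
  have hNr : (N:ℝ) = 2*s - r - u := by simpa using hN
  have hjL : j < L := Finset.mem_range.mp (hEL hj)
  have hkL : k < L := Finset.mem_range.mp (hEL hk)
  have hlL : l < L := Finset.mem_range.mp (hEL hl)
  obtain ⟨hr1, hr2⟩ := hr
  obtain ⟨hs1, hs2⟩ := hs
  obtain ⟨hu1, hu2⟩ := hu
  have h2L : (0:ℝ) < 2*L := by linarith
  have Hr1 : (j:ℝ) ≤ 2*L*r := by rw [div_le_iff₀ h2L] at hr1; linarith
  have Hs1 : (k:ℝ) ≤ 2*L*s := by rw [div_le_iff₀ h2L] at hs1; linarith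
  have Hu1 : (l:ℝ) ≤ 2*L*u := by rw [div_le_iff₀ h2L] at hu1; linarith
  have Hr2 : 2*(L:ℝ)*r < j + 1/2 := aux_clear L hLR _ _ hr2
  have Hs2 : 2*(L:ℝ)*s < k + 1/2 := aux_clear L hLR _ _ hs2
  have Hu2 : 2*(L:ℝ)*u < l + 1/2 := aux_clear L hLR _ _ hu2
  -- the integer 2LN - (2k - j - l) vanishes
  have hM : (2*(L:ℤ)*N - (2*(k:ℤ) - j - l) : ℤ) = 0 := by
    have habs : |((2*(L:ℤ)*N - (2*(k:ℤ) - (j:ℤ) - (l:ℤ)) : ℤ) : ℝ)| < 1 := by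
      push_cast
      rw [hNr, abs_lt]
      constructor <;> linarith
    have habs' : |(2*(L:ℤ)*N - (2*(k:ℤ) - (j:ℤ) - (l:ℤ)) : ℤ)| < 1 := by
      exact_mod_cast habs
    rcases abs_cases (2*(L:ℤ)*N - (2*(k:ℤ) - (j:ℤ) - (l:ℤ))) with ⟨he, _⟩ | ⟨he, _⟩ <;> omega
  have hN0 : N = 0 := by
    by_contra hne
    have h1 : (1:ℤ) ≤ |N| := Int.one_le_abs hne
    have h2 : (2*(L:ℤ)) ≤ |2*(L:ℤ)*N| := by
      rw [abs_mul, abs_of_nonneg (by positivity : (0:ℤ) ≤ 2*(L:ℤ))]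
      have h4 := mul_le_mul_of_nonneg_left h1 (by positivity : (0:ℤ) ≤ 2*(L:ℤ))
      have h5 : (0:ℤ) < L := by exact_mod_cast hL
      linarith
    have h3 : 2*(L:ℤ)*N = 2*(k:ℤ) - j - l := by linarith
    rw [h3] at h2
    have hjZ : (j:ℤ) < L := by exact_mod_cast hjL
    have hkZ : (k:ℤ) < L := by exact_mod_cast hkL
    have hlZ : (l:ℤ) < L := by exact_mod_cast hlL
    rcases abs_cases (2*(k:ℤ) - j - l) with ⟨he, _⟩ | ⟨he, _⟩ <;> omega
  subst hN0
  have h3 : j + l = 2*k := by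
    have : (2*(L:ℤ))*0 - (2*(k:ℤ) - j - l) = 0 := hM
    omega
  have hjk : j = k := hE j hj k hk l hl h3
  have hlj : l = j := by omega
  have hu0 : u = 2*s - r := by push_cast at hNr; linarith
  have hlr : (l:ℝ) = (j:ℝ) := by exact_mod_cast hlj
  rw [hlr] at hu1 hu2
  have hhalf : (1:ℝ)/(4*L) = 2*(1/(8*L)) := by field_simp; try ring
  refine ⟨s - r, ⟨by linarith, by linarith⟩, htval.symm⟩


/-- Behrend-type counterexample computation: on `𝕋 × 𝕋` with `T(x,y) = (x, y+x)`,
if `E ⊆ {0,…,L-1}` contains no nontrivial 3-term arithmetic progression,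
`B = ⋃_{j ∈ E} [j/(2L), j/(2L)+1/(4L))` and `A = 𝕋 × B`, then
`μ(A ∩ TⁿA ∩ T²ⁿA) ≤ m(B)/(4L)` for every nonzero integer `n`. -/
theorem behrend_construction_bound
    (L : ℕ) (hL : 0 < L) (E : Finset ℕ) (hEL : E ⊆ Finset.range L)
    (hE : ∀ a ∈ E, ∀ b ∈ E, ∀ c ∈ E, a + c = 2 * b → a = b)
    (B : Set (AddCircle (1 : ℝ)))
    (hB : B = ⋃ j ∈ E, ((↑·) : ℝ → AddCircle (1 : ℝ)) ''
      Set.Ico ((j : ℝ) / (2 * L)) ((j : ℝ) / (2 * L) + 1 / (4 * L)))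
    (A : Set (AddCircle (1 : ℝ) × AddCircle (1 : ℝ)))
    (hA : A = Set.univ ×ˢ B)
    (T : Equiv.Perm (AddCircle (1 : ℝ) × AddCircle (1 : ℝ)))
    (hT : ∀ p : AddCircle (1 : ℝ) × AddCircle (1 : ℝ), T p = (p.1, p.2 + p.1)) :
    ∀ n : ℤ, n ≠ 0 →
      volume (A ∩ (T ^ n : Equiv.Perm _) ⁻¹' A ∩ (T ^ (2 * n) : Equiv.Perm _) ⁻¹' A) ≤
        volume B / ((4 * L : ℕ) : ENNReal) := by
  subst hA
  have hLR : (0:ℝ) < L := by exact_mod_cast hL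
  -- powers of T
  have hTinv : ∀ p : AddCircle (1:ℝ) × AddCircle (1:ℝ), T⁻¹ p = (p.1, p.2 - p.1) := by
    intro p
    rw [Equiv.Perm.inv_def, Equiv.symm_apply_eq, hT]
    simp
  have hTn : ∀ m : ℤ, ∀ p : AddCircle (1:ℝ) × AddCircle (1:ℝ),
      (T ^ m : Equiv.Perm _) p = (p.1, p.2 + m • p.1) := by
    intro m
    induction m using Int.induction_on with
    | zero => intro p; simp
    | succ i ih =>
      intro p
      rw [show ((i:ℤ) + 1) = (i:ℤ) + 1 from rfl, zpow_add, zpow_one, Equiv.Perm.mul_apply, hT, ih]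
      rw [Prod.ext_iff]
      refine ⟨rfl, ?_⟩
      show p.2 + p.1 + (i:ℤ) • p.1 = p.2 + ((i:ℤ) + 1) • p.1
      rw [add_zsmul, one_zsmul]; abel
    | pred i ih =>
      intro p
      rw [show (-(i:ℤ) - 1) = (-(i:ℤ)) + (-1) by ring, zpow_add, zpow_neg_one,
        Equiv.Perm.mul_apply, hTinv, ih]
      rw [Prod.ext_iff]
      refine ⟨rfl, ?_⟩
      show p.2 - p.1 + (-(i:ℤ)) • p.1 = p.2 + ((-(i:ℤ)) + (-1)) • p.1
      rw [add_zsmul, neg_one_zsmul]; abel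
  intro n hn
  have hBmeas : MeasurableSet B := by
    rw [hB]
    exact E.measurableSet_biUnion (fun j _ => aux_measurableSet_image_Ico _ _)
  set S : Set (AddCircle (1:ℝ) × AddCircle (1:ℝ)) :=
    {p : AddCircle (1:ℝ) × AddCircle (1:ℝ) |
      p.2 ∈ B ∧ (p.2 + n • p.1 ∈ B ∧ p.2 + n • p.1 + n • p.1 ∈ B)} with hS
  have hset : Set.univ ×ˢ B ∩ (T ^ n : Equiv.Perm _) ⁻¹' (Set.univ ×ˢ B)
      ∩ (T ^ (2 * n) : Equiv.Perm _) ⁻¹' (Set.univ ×ˢ B) = S := by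
    ext p
    simp only [hS, Set.mem_inter_iff, Set.mem_preimage, Set.mem_prod, Set.mem_univ, true_and,
      hTn, Set.mem_setOf_eq]
    constructor
    · rintro ⟨⟨h1, h2⟩, h3⟩
      exact ⟨h1, h2, by
        rwa [show p.2 + n • p.1 + n • p.1 = p.2 + (2*n) • p.1 by rw [two_mul, add_zsmul]; abel]⟩
    · rintro ⟨h1, h2, h3⟩
      exact ⟨⟨h1, h2⟩, by
        rwa [show p.2 + (2*n) • p.1 = p.2 + n • p.1 + n • p.1 by rw [two_mul, add_zsmul]; abel]⟩
  have hcont1 : Continuous fun p : AddCircle (1:ℝ) × AddCircle (1:ℝ) => p.2 + n • p.1 :=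
    continuous_snd.add ((continuous_zsmul n).comp continuous_fst)
  have hcont2 : Continuous fun p : AddCircle (1:ℝ) × AddCircle (1:ℝ) => p.2 + n • p.1 + n • p.1 :=
    hcont1.add ((continuous_zsmul n).comp continuous_fst)
  have hSmeas : MeasurableSet S :=
    (hBmeas.preimage measurable_snd).inter
      ((hBmeas.preimage hcont1.measurable).inter (hBmeas.preimage hcont2.measurable))
  rw [hset, MeasureTheory.Measure.volume_eq_prod, MeasureTheory.Measure.prod_apply_symm hSmeas]
  have hbound : ∀ y : AddCircle (1:ℝ),
      volume ((fun x => (x, y)) ⁻¹' S) ≤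
        B.indicator (fun _ => (((4*L : ℕ) : ENNReal))⁻¹) y := by
    intro y
    by_cases hy : y ∈ B
    · rw [Set.indicator_of_mem hy]
      have hy' := hy
      rw [hB] at hy'
      simp only [Set.mem_iUnion, Set.mem_image, exists_prop] at hy'
      obtain ⟨j, hj, r, hr, hyr⟩ := hy'
      set D : Set (AddCircle (1:ℝ)) := {t | y + t ∈ B ∧ y + t + t ∈ B} with hD
      have hDmeas : MeasurableSet D :=
        (hBmeas.preimage (continuous_const.add continuous_id).measurable).inter
          (hBmeas.preimage ((continuous_const.add continuous_id).add continuous_id).measurable)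
      have hslice : (fun x => (x, y)) ⁻¹' S = (fun x : AddCircle (1:ℝ) => n • x) ⁻¹' D := by
        ext x
        simp only [hS, hD, Set.mem_preimage, Set.mem_setOf_eq]
        tauto
      have hmp := MeasureTheory.Measure.measurePreserving_zsmul
        (volume : Measure (AddCircle (1:ℝ))) hn
      rw [hslice, hmp.measure_preimage hDmeas.nullMeasurableSet]
      have hsub : D ⊆ ((↑) : ℝ → AddCircle (1:ℝ)) ''
          Set.Ico (((j:ℝ)/(2*L) - r)/2) (((j:ℝ)/(2*L) - r)/2 + 1/(8*L)) := by
        rw [hD, hB]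
        exact aux_slice L hL E hEL hE y j hj r hr hyr
      refine le_trans (measure_mono hsub) (le_trans (aux_volume_image_Ico_le _ _ ?_) ?_)
      · have : (1:ℝ)/(8*L) ≤ 1 := by
          rw [div_le_one (by positivity)]
          have : (1:ℝ) ≤ L := by exact_mod_cast hL
          linarith
        linarith
      · rw [add_sub_cancel_left]
        have h1 : (1:ℝ)/(8*L) ≤ 1/(4*L) :=
          one_div_le_one_div_of_le (by positivity) (by linarith)
        refine le_trans (ENNReal.ofReal_le_ofReal h1) (le_of_eq ?_)
        rw [← ENNReal.ofReal_natCast (4*L), ← ENNReal.ofReal_inv_of_pos (by positivity)]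
        congr 1
        push_cast
        rw [one_div]
    · rw [Set.indicator_of_notMem hy]
      have : (fun x => (x, y)) ⁻¹' S = ∅ := by
        ext x
        simp only [hS, Set.mem_preimage, Set.mem_setOf_eq, Set.mem_empty_iff_false]
        tauto
      rw [this]
      simp
  refine le_trans (MeasureTheory.lintegral_mono hbound) (le_of_eq ?_)
  rw [MeasureTheory.lintegral_indicator_const hBmeas, ENNReal.div_eq_inv_mul]
end
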